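/- arXiv:1803.04533 — 7 statements merged into one kernel-verified Lean document; each statement's English description precedes it below -/
import Mathlib

section
/- Let p be a prime and let f : ℚ_p → ℚ_p be locally analytic on ℤ_p. Then there exist a positive integer m₀ and a natural number μ such that for every integer m ≥ m₀: (i) there are exactly μ non-constant congruence classes modulo p^m with respect to the sequence (f(n))_{n∈ℕ₊} and the prime p; and (ii) each non-constant class [a]_{p^m} modulo p^m splits into p−1 constant classes [a₁]_{p^{m+1}}, …, [a_{p−1}]_{p^{m+1}} modulo p^{m+1}, each with p-adic valuation equal to min v_p(f([a]_{p^m})), and one non-constant class [a₀]_{p^{m+1}} modulo p^{m+1} with min v_p(f([a₀]_{p^{m+1}})) > min v_p(f([a]_{p^m})). -/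
open scoped Classical

/-- `p`-adic valuation of a `p`-adic number, with `v_p(0) = ⊤`. -/
noncomputable def vpQp (p : ℕ) [Fact p.Prime] (x : ℚ_[p]) : WithTop ℤ :=
  if x = 0 then ⊤ else (x.valuation : WithTop ℤ)

/-- `f : ℚ_p → ℚ_p` is locally analytic on `ℤ_p`: around every point of `ℤ_p` it is the sum
of a convergent power series on some closed ball of positive radius. -/
def LocallyAnalyticOn (p : ℕ) [Fact p.Prime] (f : ℚ_[p] → ℚ_[p]) : Prop :=
  ∀ x₀ : ℤ_[p], ∃ r : ℝ, 0 < r ∧ ∃ a : ℕ → ℚ_[p],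
    ∀ x : ℚ_[p], ‖x - (x₀ : ℚ_[p])‖ ≤ r →
      HasSum (fun n : ℕ => a n * (x - (x₀ : ℚ_[p])) ^ n) (f x)

/-- `n` is a positive integer in the congruence class `[a]_d`. -/
def inClass (a d n : ℕ) : Prop := 0 < n ∧ n ≡ a [MOD d]

/-- The class `[a]_d` is constant with respect to the sequence `c` and the prime `p`:
`v_p(c n)` is the same for all `n ∈ [a]_d`. -/
def ConstantClassP (p : ℕ) [Fact p.Prime] (c : ℕ → ℚ_[p]) (a d : ℕ) : Prop :=
  ∃ t : WithTop ℤ, ∀ n : ℕ, inClass a d n → vpQp p (c n) = t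

/-!
Near each point of `ℤ_p` the lowest nonvanishing term of the power series dominates, so on a small
ball `‖f x‖ = C ‖x - x₀‖ ^ k`. By compactness (a Lebesgue number) one radius `p ^ (-L)` works
everywhere: every ball of radius `p ^ (-m)`, `m ≥ L`, around a point of `ℤ_p` either carries a
constant `‖f‖`, or contains exactly one zero `s` of `f` and there `‖f x‖ = C ‖x - s‖ ^ k` with
`k > 0`. The non-constant classes mod `p ^ m` are then the classes of the isolated zeros of `f`
in `ℤ_p`, and such a class splits according to the distance `p ^ (-m)` or `≤ p ^ (-m-1)` to `s`.
-/

open Filter Topology Metric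

section PowerSeries

variable {E : Type*} [SeminormedAddCommGroup E] [IsUltrametricDist E]

theorem norm_add_eq_left_of_norm_lt {x y : E} (h : ‖y‖ < ‖x‖) : ‖x + y‖ = ‖x‖ := by
  rw [IsUltrametricDist.norm_add_eq_max_of_norm_ne_norm h.ne', max_eq_left h.le]

theorem norm_eq_of_norm_sub_le_mul {x y : E} {c : ℝ} (hc : c < 1) (h : ‖x - y‖ ≤ c * ‖y‖) :
    ‖x‖ = ‖y‖ := by
  rcases (norm_nonneg y).eq_or_lt with hy | hy
  · have hxy : ‖x - y‖ ≤ 0 := by rw [← hy, mul_zero] at h; exact h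
    have hx : ‖x‖ ≤ max ‖x - y‖ ‖y‖ := by
      simpa using IsUltrametricDist.norm_add_le_max (x - y) y
    rw [← hy] at hx ⊢
    exact le_antisymm (hx.trans (max_le hxy le_rfl)) (norm_nonneg x)
  · have hlt : ‖x - y‖ < ‖y‖ := h.trans_lt (by nlinarith)
    rw [← norm_add_eq_left_of_norm_lt hlt, add_sub_cancel]

variable {K : Type*} [NormedField K] [IsUltrametricDist K]

theorem exists_norm_hasSum_eq_norm_coeff_mul_pow {a : ℕ → K} {y₀ : K} (hy₀ : y₀ ≠ 0)
    (hsum : Summable fun n ↦ a n * y₀ ^ n) {k : ℕ} (hk : a k ≠ 0) (hlow : ∀ j < k, a j = 0) :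
    ∃ ρ > 0, ∀ y F, ‖y‖ ≤ ρ → HasSum (fun n ↦ a n * y ^ n) F → ‖F‖ = ‖a k‖ * ‖y‖ ^ k := by
  set R := ‖y₀‖
  have hR : 0 < R := norm_pos_iff.mpr hy₀
  obtain ⟨B, hB⟩ := hsum.tendsto_atTop_zero.norm.bddAbove_range
  have hBn (n : ℕ) : ‖a n‖ * R ^ n ≤ B := by
    simpa [norm_mul, norm_pow] using hB (Set.mem_range_self n)
  have hak : 0 < ‖a k‖ := norm_pos_iff.mpr hk
  have hBpos : 0 < B := (mul_pos hak (pow_pos hR k)).trans_le (hBn k)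
  set ρ := min R (‖a k‖ * R ^ (k + 1) / (2 * B))
  refine ⟨ρ, lt_min hR (by positivity), fun y F hy hF ↦ ?_⟩
  have hyR : ‖y‖ ≤ R := hy.trans (min_le_left _ _)
  have hterm (n : ℕ) (hn : n ≠ k) : ‖a n * y ^ n‖ ≤ B * (‖y‖ / R) ^ (k + 1) := by
    rcases hn.lt_or_gt with hn | hn
    · rw [hlow n hn, zero_mul, norm_zero]; positivity
    have hq : ‖y‖ / R ≤ 1 := (div_le_one hR).mpr hyR
    calc ‖a n * y ^ n‖ = ‖a n‖ * R ^ n * (‖y‖ / R) ^ n := by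
          rw [norm_mul, norm_pow, div_pow, mul_assoc, mul_div_cancel₀ _ (pow_pos hR n).ne']
      _ ≤ B * (‖y‖ / R) ^ (k + 1) :=
          mul_le_mul (hBn n) (pow_le_pow_of_le_one (by positivity) hq hn) (by positivity)
            hBpos.le
  have hrest : ‖F - a k * y ^ k‖ ≤ B * (‖y‖ / R) ^ (k + 1) := by
    rw [show F - a k * y ^ k = 0 - a k * y ^ k + F by ring, ← (hF.update k 0).tsum_eq]
    refine IsUltrametricDist.norm_tsum_le_of_forall_le_of_nonneg (by positivity) fun n ↦ ?_
    rcases eq_or_ne n k with rfl | hn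
    · rw [Function.update_self, norm_zero]; positivity
    · rw [Function.update_of_ne hn]; exact hterm n hn
  have hsmall : B * (‖y‖ / R) ^ (k + 1) ≤ 1 / 2 * ‖a k * y ^ k‖ := by
    have hyρ : ‖y‖ ≤ ‖a k‖ * R ^ (k + 1) / (2 * B) := hy.trans (min_le_right _ _)
    rw [norm_mul, norm_pow, div_pow, pow_succ ‖y‖]
    rw [le_div_iff₀ (by positivity)] at hyρ
    rw [mul_div_assoc', div_le_iff₀ (by positivity)]
    nlinarith [pow_nonneg (norm_nonneg y) k]
  rw [norm_eq_of_norm_sub_le_mul (by norm_num) (hrest.trans hsmall), norm_mul, norm_pow]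

end PowerSeries

namespace ValuationClasses

variable {p : ℕ} [hp : Fact p.Prime]

noncomputable def radius (p m : ℕ) : ℝ := (p : ℝ) ^ (-(m : ℤ))

omit hp in
lemma radius_zero : radius p 0 = 1 := by simp [radius]

lemma one_lt_p_real : (1 : ℝ) < p := by exact_mod_cast hp.out.one_lt

lemma radius_pos (m : ℕ) : 0 < radius p m := zpow_pos (one_pos.trans one_lt_p_real) _

lemma radius_strictAnti : StrictAnti (radius p) := fun _ _ h ↦
  zpow_lt_zpow_right₀ one_lt_p_real (by omega)

lemma radius_le_one (m : ℕ) : radius p m ≤ 1 :=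
  radius_zero (p := p) ▸ radius_strictAnti.antitone (Nat.zero_le m)

lemma exists_radius_lt {ε : ℝ} (hε : 0 < ε) : ∃ m, radius p m < ε := by
  obtain ⟨m, hm⟩ := exists_pow_lt_of_lt_one hε (inv_lt_one_of_one_lt₀ (one_lt_p_real (p := p)))
  exact ⟨m, by rwa [radius, zpow_neg, zpow_natCast, ← inv_pow]⟩

lemma norm_p_pow (m : ℕ) : ‖(p : ℚ_[p]) ^ m‖ = radius p m := Padic.norm_p_pow m

lemma norm_eq_radius_of_lt_of_le {x : ℚ_[p]} {m : ℕ} (hlt : radius p (m + 1) < ‖x‖)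
    (hle : ‖x‖ ≤ radius p m) : ‖x‖ = radius p m := by
  have hx : x ≠ 0 := norm_pos_iff.mp ((radius_pos _).trans hlt)
  rw [radius, Padic.norm_eq_zpow_neg_valuation hx] at hlt hle ⊢
  have h₁ := (zpow_lt_zpow_iff_right₀ one_lt_p_real).mp hlt
  have h₂ := (zpow_le_zpow_iff_right₀ one_lt_p_real).mp hle
  congr 1
  push_cast at h₁
  omega

lemma natCast_mem_closedBall_iff {n a m : ℕ} :
    (n : ℚ_[p]) ∈ closedBall (a : ℚ_[p]) (radius p m) ↔ n ≡ a [MOD p ^ m] := by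
  rw [mem_closedBall_iff_norm, Nat.ModEq.comm, Nat.modEq_iff_dvd, radius,
    show (n : ℚ_[p]) - a = ((n - a : ℤ) : ℚ_[p]) by push_cast; ring,
    Padic.norm_int_le_pow_iff_dvd]
  push_cast
  rfl

lemma norm_natCast_le_one (n : ℕ) : ‖(n : ℚ_[p])‖ ≤ 1 := by
  simpa using Padic.norm_int_le_one (p := p) n

lemma norm_le_one_of_mem_closedBall {x : ℚ_[p]} {a m : ℕ}
    (h : x ∈ closedBall (a : ℚ_[p]) (radius p m)) : ‖x‖ ≤ 1 := by
  have := IsUltrametricDist.norm_add_le_max (x - a) (a : ℚ_[p])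
  rw [sub_add_cancel] at this
  exact this.trans (max_le ((mem_closedBall_iff_norm.mp h).trans (radius_le_one m))
    (norm_natCast_le_one a))

lemma appr_mem_closedBall (x : ℤ_[p]) (m : ℕ) :
    ((x.appr m : ℕ) : ℚ_[p]) ∈ closedBall (x : ℚ_[p]) (radius p m) := by
  have h := (PadicInt.norm_le_pow_iff_mem_span_pow _ m).mpr (PadicInt.appr_spec m x)
  rw [PadicInt.norm_def, PadicInt.coe_sub, PadicInt.coe_natCast] at h
  rwa [mem_closedBall_iff_norm', radius]

lemma exists_pos_natCast_mem_closedBall {z : ℚ_[p]} (hz : ‖z‖ ≤ 1) (m : ℕ) :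
    ∃ n : ℕ, 0 < n ∧ (n : ℚ_[p]) ∈ closedBall z (radius p m) := by
  set x : ℤ_[p] := ⟨z, hz⟩
  refine ⟨x.appr m + p ^ m, Nat.add_pos_right _ (pow_pos hp.out.pos m), ?_⟩
  have h := mem_closedBall_iff_norm.mp (appr_mem_closedBall x m)
  rw [mem_closedBall_iff_norm, Nat.cast_add, Nat.cast_pow, add_sub_right_comm]
  exact (IsUltrametricDist.norm_add_le_max _ _).trans (max_le h (norm_p_pow m).le)

lemma exists_digit_modEq {n a m : ℕ} (h : n ≡ a [MOD p ^ m]) :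
    ∃ i < p, n ≡ a + i * p ^ m [MOD p ^ (m + 1)] := by
  obtain ⟨q, hq⟩ := (Nat.modEq_iff_dvd.mp h)
  have hp0 : (0 : ℤ) < p := by exact_mod_cast hp.out.pos
  have hlt := Int.emod_lt_of_pos (-q) hp0
  refine ⟨((-q) % p).toNat, by omega, Nat.modEq_iff_dvd.mpr ⟨-((-q) / p), ?_⟩⟩
  have hdiv := Int.emod_add_mul_ediv (-q) p
  push_cast at hq ⊢
  rw [Int.toNat_of_nonneg (Int.emod_nonneg _ hp0.ne')]
  linear_combination hq + (p : ℤ) ^ m * hdiv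

lemma digit_eq_of_modEq {a i j m : ℕ} (hi : i < p) (hj : j < p)
    (h : a + i * p ^ m ≡ a + j * p ^ m [MOD p ^ (m + 1)]) : i = j := by
  rw [pow_succ'] at h
  exact Nat.ModEq.eq_of_lt_of_lt
    (Nat.ModEq.mul_right_cancel' (pow_ne_zero m hp.out.ne_zero) (Nat.ModEq.add_left_cancel' a h))
    hi hj

lemma vpQp_le_vpQp_iff {x y : ℚ_[p]} : vpQp p x ≤ vpQp p y ↔ ‖y‖ ≤ ‖x‖ := by
  rcases eq_or_ne x 0 with rfl | hx
  · simp [vpQp]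
  rcases eq_or_ne y 0 with rfl | hy
  · simp [vpQp]
  rw [vpQp, vpQp, if_neg hx, if_neg hy, WithTop.coe_le_coe, Padic.norm_eq_zpow_neg_valuation hx,
    Padic.norm_eq_zpow_neg_valuation hy, zpow_le_zpow_iff_right₀ one_lt_p_real, neg_le_neg_iff]

lemma vpQp_eq_vpQp_iff {x y : ℚ_[p]} : vpQp p x = vpQp p y ↔ ‖x‖ = ‖y‖ := by
  rw [le_antisymm_iff, le_antisymm_iff, vpQp_le_vpQp_iff, vpQp_le_vpQp_iff, and_comm]

lemma vpQp_lt_vpQp_iff {x y : ℚ_[p]} : vpQp p x < vpQp p y ↔ ‖y‖ < ‖x‖ := by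
  rw [lt_iff_not_ge, vpQp_le_vpQp_iff, not_le]

section Classes

variable {c : ℕ → ℚ_[p]} {a d : ℕ}

lemma constantClassP_of_forall_norm_eq {n₀ : ℕ} (h : ∀ n, inClass a d n → ‖c n‖ = ‖c n₀‖) :
    ConstantClassP p c a d :=
  ⟨vpQp p (c n₀), fun n hn ↦ vpQp_eq_vpQp_iff.mpr (h n hn)⟩

lemma not_constantClassP_of_norm_ne {n₁ n₂ : ℕ} (h₁ : inClass a d n₁) (h₂ : inClass a d n₂)
    (hne : ‖c n₁‖ ≠ ‖c n₂‖) : ¬ ConstantClassP p c a d := by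
  rintro ⟨t, ht⟩
  exact hne (vpQp_eq_vpQp_iff.mp ((ht n₁ h₁).trans (ht n₂ h₂).symm))

lemma isLeast_vpQp_of_forall_norm_le {n₁ : ℕ} (h₁ : inClass a d n₁)
    (h : ∀ n, inClass a d n → ‖c n‖ ≤ ‖c n₁‖) :
    IsLeast {v | ∃ n, inClass a d n ∧ vpQp p (c n) = v} (vpQp p (c n₁)) :=
  ⟨⟨n₁, h₁, rfl⟩, by rintro _ ⟨n, hn, rfl⟩; exact vpQp_le_vpQp_iff.mpr (h n hn)⟩

end Classes

lemma mem_closedBall_of_inClass {b μ n : ℕ} (h : inClass b (p ^ μ) n) :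
    (n : ℚ_[p]) ∈ closedBall (b : ℚ_[p]) (radius p μ) :=
  natCast_mem_closedBall_iff.mpr h.2

lemma exists_inClass_norm_sub_eq {s : ℚ_[p]} {b μ j : ℕ}
    (hs : s ∈ closedBall (b : ℚ_[p]) (radius p μ)) (hj : μ ≤ j) :
    ∃ n, inClass b (p ^ μ) n ∧ ‖(n : ℚ_[p]) - s‖ = radius p j := by
  have hz : ‖s + (p : ℚ_[p]) ^ j‖ ≤ 1 := (IsUltrametricDist.norm_add_le_max _ _).trans
    (max_le (norm_le_one_of_mem_closedBall hs) ((norm_p_pow j).trans_le (radius_le_one j)))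
  obtain ⟨n, hn, hnz⟩ := exists_pos_natCast_mem_closedBall hz (j + 1)
  have hsmall : ‖(n : ℚ_[p]) - (s + (p : ℚ_[p]) ^ j)‖ < ‖(p : ℚ_[p]) ^ j‖ := by
    rw [norm_p_pow]
    exact (mem_closedBall_iff_norm.mp hnz).trans_lt (radius_strictAnti (Nat.lt_succ_self j))
  have hns : ‖(n : ℚ_[p]) - s‖ = radius p j := by
    rw [show (n : ℚ_[p]) - s = (p : ℚ_[p]) ^ j + (n - (s + (p : ℚ_[p]) ^ j)) by ring,
      norm_add_eq_left_of_norm_lt hsmall, norm_p_pow]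
  refine ⟨n, ⟨hn, natCast_mem_closedBall_iff.mp ?_⟩, hns⟩
  rw [IsUltrametricDist.closedBall_eq_of_mem hs]
  exact mem_closedBall_iff_norm.mpr (hns.trans_le (radius_strictAnti.antitone hj))

lemma norm_natCast_sub_le_of_modEq {s : ℚ_[p]} {b μ n : ℕ}
    (hs : s ∈ closedBall (b : ℚ_[p]) (radius p μ)) (hn : n ≡ b [MOD p ^ μ]) :
    ‖(n : ℚ_[p]) - s‖ ≤ radius p μ := by
  rw [← mem_closedBall_iff_norm, ← IsUltrametricDist.closedBall_eq_of_mem hs]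
  exact natCast_mem_closedBall_iff.mpr hn

lemma exists_digit_mem_closedBall {s : ℚ_[p]} {a m : ℕ}
    (hs : s ∈ closedBall (a : ℚ_[p]) (radius p m)) :
    ∃ i < p, s ∈ closedBall ((a + i * p ^ m : ℕ) : ℚ_[p]) (radius p (m + 1)) := by
  obtain ⟨N, -, hN⟩ := exists_pos_natCast_mem_closedBall (norm_le_one_of_mem_closedBall hs) (m + 1)
  have hNa : N ≡ a [MOD p ^ m] := by
    rw [← natCast_mem_closedBall_iff, IsUltrametricDist.closedBall_eq_of_mem hs]
    exact closedBall_subset_closedBall (radius_strictAnti.antitone (Nat.le_succ m)) hN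
  obtain ⟨i, hi, hNi⟩ := exists_digit_modEq hNa
  refine ⟨i, hi, ?_⟩
  rw [IsUltrametricDist.closedBall_eq_of_mem (natCast_mem_closedBall_iff.mpr hNi)]
  exact mem_closedBall_comm.mp hN

lemma norm_sub_eq_radius_of_digit_ne {s : ℚ_[p]} {a m i i₀ n : ℕ} (hi : i < p) (hi₀ : i₀ < p)
    (hne : i ≠ i₀) (hs : s ∈ closedBall ((a + i₀ * p ^ m : ℕ) : ℚ_[p]) (radius p (m + 1)))
    (hn : n ≡ a + i * p ^ m [MOD p ^ (m + 1)]) : ‖(n : ℚ_[p]) - s‖ = radius p m := by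
  have hsm : s ∈ closedBall ((a + i₀ * p ^ m : ℕ) : ℚ_[p]) (radius p m) :=
    closedBall_subset_closedBall (radius_strictAnti.antitone (Nat.le_succ m)) hs
  have hnm : n ≡ a + i₀ * p ^ m [MOD p ^ m] :=
    ((Nat.ModEq.of_dvd (pow_dvd_pow p (Nat.le_succ m)) hn).trans
      (Nat.add_mul_mod_self_right a i (p ^ m))).trans (Nat.add_mul_mod_self_right a i₀ (p ^ m)).symm
  refine norm_eq_radius_of_lt_of_le (lt_of_not_ge fun hle ↦ hne ?_)
    (norm_natCast_sub_le_of_modEq hsm hnm)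
  refine digit_eq_of_modEq hi hi₀ (hn.symm.trans (natCast_mem_closedBall_iff.mp ?_))
  rw [IsUltrametricDist.closedBall_eq_of_mem hs]
  exact mem_closedBall_iff_norm.mpr hle

lemma mul_radius_pow_lt {C : ℝ} {k : ℕ} (hC : 0 < C) (hk : k ≠ 0) (m : ℕ) :
    C * radius p (m + 1) ^ k < C * radius p m ^ k :=
  mul_lt_mul_of_pos_left
    (pow_lt_pow_left₀ (radius_strictAnti (Nat.lt_succ_self m)) (radius_pos _).le hk) hC

section Monomial

variable {f : ℚ_[p] → ℚ_[p]} {s : ℚ_[p]} {C : ℝ} {k : ℕ}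

lemma exists_isLeast_of_norm_eq_mul_pow {b μ : ℕ} (hC : 0 ≤ C)
    (hs : s ∈ closedBall (b : ℚ_[p]) (radius p μ))
    (hf : ∀ x ∈ closedBall (b : ℚ_[p]) (radius p μ), ‖f x‖ = C * ‖x - s‖ ^ k) :
    ∃ n₁, inClass b (p ^ μ) n₁ ∧ ‖f n₁‖ = C * radius p μ ^ k ∧
      IsLeast {v | ∃ n : ℕ, inClass b (p ^ μ) n ∧ vpQp p (f n) = v} (vpQp p (f n₁)) := by
  obtain ⟨n₁, h₁, hn₁⟩ := exists_inClass_norm_sub_eq hs le_rfl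
  have hfn₁ : ‖f n₁‖ = C * radius p μ ^ k := by rw [hf _ (mem_closedBall_of_inClass h₁), hn₁]
  refine ⟨n₁, h₁, hfn₁, isLeast_vpQp_of_forall_norm_le (c := fun n : ℕ ↦ f n) h₁ fun n hn ↦ ?_⟩
  rw [hfn₁, hf _ (mem_closedBall_of_inClass hn)]
  exact mul_le_mul_of_nonneg_left
    (pow_le_pow_left₀ (norm_nonneg _) (norm_natCast_sub_le_of_modEq hs hn.2) k) hC

lemma not_constantClassP_of_norm_eq_mul_pow {b μ : ℕ} (hC : 0 < C) (hk : k ≠ 0)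
    (hs : s ∈ closedBall (b : ℚ_[p]) (radius p μ))
    (hf : ∀ x ∈ closedBall (b : ℚ_[p]) (radius p μ), ‖f x‖ = C * ‖x - s‖ ^ k) :
    ¬ ConstantClassP p (fun n : ℕ ↦ f n) b (p ^ μ) := by
  obtain ⟨n₁, h₁, hn₁⟩ := exists_inClass_norm_sub_eq hs le_rfl
  obtain ⟨n₂, h₂, hn₂⟩ := exists_inClass_norm_sub_eq hs (Nat.le_succ μ)
  refine not_constantClassP_of_norm_ne h₁ h₂ ?_
  rw [hf _ (mem_closedBall_of_inClass h₁), hf _ (mem_closedBall_of_inClass h₂), hn₁, hn₂]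
  exact (mul_radius_pow_lt hC hk μ).ne'

theorem exists_splitting_of_norm_eq_mul_pow {a m : ℕ} (hC : 0 < C) (hk : k ≠ 0)
    (hs : s ∈ closedBall (a : ℚ_[p]) (radius p m))
    (hf : ∀ x ∈ closedBall (a : ℚ_[p]) (radius p m), ‖f x‖ = C * ‖x - s‖ ^ k) :
    ∃ t : WithTop ℤ,
      IsLeast {v : WithTop ℤ | ∃ n : ℕ, inClass a (p ^ m) n ∧ vpQp p (f (n : ℚ_[p])) = v} t ∧
      ∃ i₀ : ℕ, i₀ < p ∧
        (∀ i : ℕ, i < p → i ≠ i₀ →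
          ∀ n : ℕ, inClass (a + i * p ^ m) (p ^ (m + 1)) n →
            vpQp p (f (n : ℚ_[p])) = t) ∧
        (¬ ConstantClassP p (fun n => f (n : ℚ_[p])) (a + i₀ * p ^ m) (p ^ (m + 1))) ∧
        ∃ t' : WithTop ℤ,
          IsLeast {v : WithTop ℤ | ∃ n : ℕ,
            inClass (a + i₀ * p ^ m) (p ^ (m + 1)) n ∧ vpQp p (f (n : ℚ_[p])) = v} t' ∧
          t < t' := by
  obtain ⟨n₁, -, hfn₁, hleast₁⟩ := exists_isLeast_of_norm_eq_mul_pow hC.le hs hf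
  obtain ⟨i₀, hi₀, hs₀⟩ := exists_digit_mem_closedBall hs
  have hf₀ : ∀ x ∈ closedBall ((a + i₀ * p ^ m : ℕ) : ℚ_[p]) (radius p (m + 1)),
      ‖f x‖ = C * ‖x - s‖ ^ k := by
    refine fun x hx ↦ hf x ?_
    rw [IsUltrametricDist.closedBall_eq_of_mem hs] 
    rw [IsUltrametricDist.closedBall_eq_of_mem hs₀] at hx
    exact closedBall_subset_closedBall (radius_strictAnti.antitone (Nat.le_succ m)) hx
  obtain ⟨n₂, -, hfn₂, hleast₂⟩ := exists_isLeast_of_norm_eq_mul_pow hC.le hs₀ hf₀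
  refine ⟨_, hleast₁, i₀, hi₀, fun i hi hne n hn ↦ ?_,
    not_constantClassP_of_norm_eq_mul_pow hC hk hs₀ hf₀, _, hleast₂, ?_⟩
  · have hna : n ≡ a [MOD p ^ m] := (Nat.ModEq.of_dvd (pow_dvd_pow p (Nat.le_succ m)) hn.2).trans
      (Nat.add_mul_mod_self_right a i (p ^ m))
    rw [vpQp_eq_vpQp_iff, hfn₁, hf _ (natCast_mem_closedBall_iff.mpr hna),
      norm_sub_eq_radius_of_digit_ne hi hi₀ hne hs₀ hn.2]
  · rw [vpQp_lt_vpQp_iff, hfn₁, hfn₂]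
    exact mul_radius_pow_lt hC hk m

end Monomial

def isolatedZeros (f : ℚ_[p] → ℚ_[p]) : Set ℤ_[p] :=
  {s | f s = 0 ∧ ∀ᶠ x in 𝓝[≠] (s : ℚ_[p]), f x ≠ 0}

def NormMonomialOrConstOn (f : ℚ_[p] → ℚ_[p]) (B : Set ℚ_[p]) : Prop :=
  (∃ (s : ℚ_[p]) (C : ℝ) (k : ℕ), 0 < C ∧ k ≠ 0 ∧ s ∈ B ∧ ∀ x ∈ B, ‖f x‖ = C * ‖x - s‖ ^ k) ∨
    ∃ c : ℝ, ∀ x ∈ B, ‖f x‖ = c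

section Zeros

variable {f : ℚ_[p] → ℚ_[p]} {B : Set ℚ_[p]} {s : ℤ_[p]}

lemma mem_isolatedZeros_of_norm_eq_mul_pow {C : ℝ} {k : ℕ} (hB : IsOpen B) (hs : (s : ℚ_[p]) ∈ B)
    (hC : 0 < C) (hk : k ≠ 0) (hf : ∀ x ∈ B, ‖f x‖ = C * ‖x - s‖ ^ k) :
    s ∈ isolatedZeros f := by
  refine ⟨norm_eq_zero.mp (by rw [hf _ hs, sub_self, norm_zero, zero_pow hk, mul_zero]), ?_⟩
  filter_upwards [nhdsWithin_le_nhds (hB.mem_nhds hs), self_mem_nhdsWithin] with x hxB hxs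
  rw [← norm_pos_iff, hf x hxB]
  exact mul_pos hC (pow_pos (norm_pos_iff.mpr (sub_ne_zero.mpr hxs)) k)

lemma not_mem_isolatedZeros_of_norm_eq_const {c : ℝ} (hB : IsOpen B) (hs : (s : ℚ_[p]) ∈ B)
    (hf : ∀ x ∈ B, ‖f x‖ = c) : s ∉ isolatedZeros f := by
  rintro ⟨hfs, hne⟩
  have hc : c = 0 := by rw [← hf _ hs, hfs, norm_zero]
  obtain ⟨x, hx, hxB⟩ := (hne.and (nhdsWithin_le_nhds (hB.mem_nhds hs))).exists
  exact hx (norm_eq_zero.mp ((hf x hxB).trans hc))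

lemma NormMonomialOrConstOn.eq_of_mem_isolatedZeros (h : NormMonomialOrConstOn f B)
    (hB : IsOpen B) {s' : ℤ_[p]} (hs : s ∈ isolatedZeros f) (hs' : s' ∈ isolatedZeros f)
    (hsB : (s : ℚ_[p]) ∈ B) (hs'B : (s' : ℚ_[p]) ∈ B) : s = s' := by
  rcases h with ⟨s₀, C, k, hC, -, -, hf⟩ | ⟨c, hc⟩
  · have eq_center {x : ℚ_[p]} (hx : x ∈ B) (hfx : f x = 0) : x = s₀ := by
      have h := hf x hx
      rw [hfx, norm_zero, zero_eq_mul] at h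
      exact sub_eq_zero.mp (norm_eq_zero.mp (eq_zero_of_pow_eq_zero (h.resolve_left hC.ne')))
    exact PadicInt.ext ((eq_center hsB hs.1).trans (eq_center hs'B hs'.1).symm)
  · exact absurd hs (not_mem_isolatedZeros_of_norm_eq_const hB hsB hc)

variable {a m : ℕ}

lemma constantClassP_of_norm_eq_const {c : ℝ}
    (hf : ∀ x ∈ closedBall (a : ℚ_[p]) (radius p m), ‖f x‖ = c) :
    ConstantClassP p (fun n : ℕ ↦ f n) a (p ^ m) :=
  constantClassP_of_forall_norm_eq (n₀ := a) fun n hn ↦ by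
    rw [hf _ (mem_closedBall_of_inClass hn), hf _ (mem_closedBall_self (radius_pos m).le)]

lemma NormMonomialOrConstOn.not_constantClassP_iff
    (h : NormMonomialOrConstOn f (closedBall (a : ℚ_[p]) (radius p m))) :
    ¬ ConstantClassP p (fun n : ℕ ↦ f n) a (p ^ m) ↔
      ∃ s ∈ isolatedZeros f, (s : ℚ_[p]) ∈ closedBall (a : ℚ_[p]) (radius p m) := by
  have hB := IsUltrametricDist.isOpen_closedBall (a : ℚ_[p]) (radius_pos (p := p) m).ne'
  constructor
  · intro hnc
    rcases h with ⟨s, C, k, hC, hk, hs, hf⟩ | ⟨c, hc⟩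
    · exact ⟨⟨s, norm_le_one_of_mem_closedBall hs⟩,
        mem_isolatedZeros_of_norm_eq_mul_pow hB hs hC hk hf, hs⟩
    · exact absurd (constantClassP_of_norm_eq_const hc) hnc
  · rintro ⟨s, hsZ, hs⟩
    rcases h with ⟨s₀, C, k, hC, hk, hs₀, hf⟩ | ⟨c, hc⟩
    · exact not_constantClassP_of_norm_eq_mul_pow hC hk hs₀ hf
    · exact absurd hsZ (not_mem_isolatedZeros_of_norm_eq_const hB hs hc)

theorem ncard_not_constantClassP
    (h : ∀ z ∈ closedBall (0 : ℚ_[p]) 1, NormMonomialOrConstOn f (closedBall z (radius p m))) :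
    {a : ℕ | a < p ^ m ∧ ¬ ConstantClassP p (fun n : ℕ ↦ f n) a (p ^ m)}.ncard =
      (isolatedZeros f).ncard := by
  have hnat (a : ℕ) := h a (mem_closedBall_zero_iff.mpr (norm_natCast_le_one a))
  have happr (s : ℤ_[p]) : (s : ℚ_[p]) ∈ closedBall ((s.appr m : ℕ) : ℚ_[p]) (radius p m) :=
    mem_closedBall_comm.mp (appr_mem_closedBall s m)
  have himage : {a : ℕ | a < p ^ m ∧ ¬ ConstantClassP p (fun n : ℕ ↦ f n) a (p ^ m)} =
      (fun s : ℤ_[p] ↦ s.appr m) '' isolatedZeros f := by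
    ext a
    rw [Set.mem_ofPred_eq, (hnat a).not_constantClassP_iff]
    constructor
    · rintro ⟨ha, s, hs, hsa⟩
      refine ⟨s, hs, Nat.ModEq.eq_of_lt_of_lt (natCast_mem_closedBall_iff.mp ?_) (s.appr_lt m) ha⟩
      rw [IsUltrametricDist.closedBall_eq_of_mem hsa]
      exact appr_mem_closedBall s m
    · rintro ⟨s, hs, rfl⟩
      exact ⟨s.appr_lt m, s, hs, happr s⟩
  rw [himage, Set.InjOn.ncard_image]
  intro s hs s' hs' hss'
  exact (hnat (s.appr m)).eq_of_mem_isolatedZeros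
    (IsUltrametricDist.isOpen_closedBall _ (radius_pos m).ne') hs hs' (happr s)
    (by rw [show s.appr m = s'.appr m from hss']; exact happr s')

end Zeros

lemma normMonomialOrConstOn_closedBall {f : ℚ_[p] → ℚ_[p]} {z x₀ : ℚ_[p]} {r C : ℝ} {k : ℕ}
    (hC : 0 ≤ C) (hf : ∀ x ∈ closedBall z r, ‖f x‖ = C * ‖x - x₀‖ ^ k) :
    NormMonomialOrConstOn f (closedBall z r) := by
  rcases hC.eq_or_lt with rfl | hC
  · exact .inr ⟨0, fun x hx ↦ by rw [hf x hx, zero_mul]⟩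
  rcases eq_or_ne k 0 with rfl | hk
  · exact .inr ⟨C, fun x hx ↦ by rw [hf x hx, pow_zero, mul_one]⟩
  by_cases hx₀ : x₀ ∈ closedBall z r
  · exact .inl ⟨x₀, C, k, hC, hk, hx₀, hf⟩
  refine .inr ⟨C * ‖z - x₀‖ ^ k, fun x hx ↦ ?_⟩
  have hlt : dist x z < dist z x₀ :=
    (mem_closedBall.mp hx).trans_lt (not_le.mp (mt mem_closedBall_comm.mp hx₀))
  rw [hf x hx, ← dist_eq_norm, ← dist_eq_norm,
    IsUltrametricDist.dist_eq_max_of_dist_ne_dist _ _ _ hlt.ne, max_eq_right hlt.le]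

end ValuationClasses

open ValuationClasses

namespace LocallyAnalyticOn

variable {p : ℕ} [hp : Fact p.Prime] {f : ℚ_[p] → ℚ_[p]}

theorem exists_norm_eq_mul_norm_sub_pow (hf : LocallyAnalyticOn p f) (x₀ : ℤ_[p]) :
    ∃ ρ > 0, ∃ C ≥ 0, ∃ k : ℕ, ∀ x ∈ ball (x₀ : ℚ_[p]) ρ, ‖f x‖ = C * ‖x - x₀‖ ^ k := by
  obtain ⟨r, hr, a, ha⟩ := hf x₀
  by_cases hzero : ∀ n, a n = 0
  · refine ⟨r, hr, 0, le_rfl, 0, fun x hx ↦ ?_⟩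
    rw [zero_mul, norm_eq_zero]
    exact (ha x (mem_ball_iff_norm.mp hx).le).unique (by simp [hzero, hasSum_zero])
  replace hzero : ∃ n, a n ≠ 0 := not_forall.mp hzero
  obtain ⟨j, hj⟩ := exists_radius_lt (p := p) hr
  have hsum := ha (x₀ + (p : ℚ_[p]) ^ j) (by rw [add_sub_cancel_left, norm_p_pow]; exact hj.le)
  rw [add_sub_cancel_left] at hsum
  obtain ⟨ρ, hρ, hF⟩ := exists_norm_hasSum_eq_norm_coeff_mul_pow (y₀ := (p : ℚ_[p]) ^ j)
    (pow_ne_zero j (Nat.cast_ne_zero.mpr hp.out.ne_zero)) hsum.summable (Nat.find_spec hzero)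
    fun i hi ↦ not_not.mp (Nat.find_min hzero hi)
  refine ⟨min ρ r, lt_min hρ hr, ‖a (Nat.find hzero)‖, norm_nonneg _, Nat.find hzero, fun x hx ↦ ?_⟩
  rw [mem_ball_iff_norm, lt_min_iff] at hx
  exact hF _ _ hx.1.le (ha x hx.2.le)

theorem exists_normMonomialOrConstOn (hf : LocallyAnalyticOn p f) :
    ∃ L, ∀ m ≥ L, ∀ z ∈ closedBall (0 : ℚ_[p]) 1,
      NormMonomialOrConstOn f (closedBall z (radius p m)) := by
  choose ρ hρ C hC k hk using hf.exists_norm_eq_mul_norm_sub_pow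
  obtain ⟨δ, hδ, hleb⟩ := lebesgue_number_lemma_of_metric (isCompact_closedBall (0 : ℚ_[p]) 1)
    (c := fun x₀ : ℤ_[p] ↦ ball (x₀ : ℚ_[p]) (ρ x₀)) (fun _ ↦ isOpen_ball) fun z hz ↦
      Set.mem_iUnion.mpr ⟨⟨z, mem_closedBall_zero_iff.mp hz⟩, mem_ball_self (hρ _)⟩
  obtain ⟨L, hL⟩ := exists_radius_lt (p := p) hδ
  refine ⟨L, fun m hm z hz ↦ ?_⟩
  obtain ⟨x₀, hsub⟩ := hleb z hz
  have hball : closedBall z (radius p m) ⊆ ball (x₀ : ℚ_[p]) (ρ x₀) :=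
    (closedBall_subset_ball ((radius_strictAnti.antitone hm).trans_lt hL)).trans hsub
  exact normMonomialOrConstOn_closedBall (hC x₀) fun x hx ↦ hk x₀ x (hball hx)

end LocallyAnalyticOn

theorem stmt4 (p : ℕ) [Fact p.Prime] (f : ℚ_[p] → ℚ_[p]) (hf : LocallyAnalyticOn p f) :
    ∃ m₀ : ℕ, 0 < m₀ ∧ ∃ μ : ℕ, ∀ m : ℕ, m₀ ≤ m →
      ({a : ℕ | a < p ^ m ∧ ¬ ConstantClassP p (fun n => f (n : ℚ_[p])) a (p ^ m)}.ncard = μ ∧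
      ∀ a : ℕ, ¬ ConstantClassP p (fun n => f (n : ℚ_[p])) a (p ^ m) →
        -- `t` is the minimum of the valuations on the class `[a]_{p^m}`
        ∃ t : WithTop ℤ,
          IsLeast {v : WithTop ℤ | ∃ n : ℕ, inClass a (p ^ m) n ∧ vpQp p (f (n : ℚ_[p])) = v} t ∧
          ∃ i₀ : ℕ, i₀ < p ∧
            -- the other `p - 1` subclasses mod `p^(m+1)` are constant with valuation `t`
            (∀ i : ℕ, i < p → i ≠ i₀ →
              ∀ n : ℕ, inClass (a + i * p ^ m) (p ^ (m + 1)) n →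
                vpQp p (f (n : ℚ_[p])) = t) ∧
            -- one subclass is non-constant, with strictly larger minimal valuation
            (¬ ConstantClassP p (fun n => f (n : ℚ_[p])) (a + i₀ * p ^ m) (p ^ (m + 1))) ∧
            ∃ t' : WithTop ℤ,
              IsLeast {v : WithTop ℤ | ∃ n : ℕ,
                inClass (a + i₀ * p ^ m) (p ^ (m + 1)) n ∧ vpQp p (f (n : ℚ_[p])) = v} t' ∧
              t < t') := by
  obtain ⟨L, hL⟩ := hf.exists_normMonomialOrConstOn
  refine ⟨L + 1, L.succ_pos, (isolatedZeros f).ncard, fun m hm ↦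
    ⟨ncard_not_constantClassP (hL m (by omega)), fun a ha ↦ ?_⟩⟩
  rcases hL m (by omega) a (mem_closedBall_zero_iff.mpr (norm_natCast_le_one a)) with
    ⟨s, C, k, hC, hk, hs, hfs⟩ | ⟨c, hc⟩
  · exact exists_splitting_of_norm_eq_mul_pow hC hk hs hfs
  · exact absurd (constantClassP_of_norm_eq_const hc) ha
end

section
/- Let p be a prime and let f : ℚ_p → ℚ_p be locally analytic on ℤ_p. Then there exists a positive integer m₀ such that for each congruence class [a]_{p^{m₀}} modulo p^{m₀} that is non-constant with respect to the sequence (f(n))_{n∈ℕ₊} and the prime p, there exist an integer β, a positive integer l, and x₀ ∈ ℤ_p such that v_p(f(n)) = β + l·v_p(n − x₀) for every positive integer n ≡ a (mod p^{m₀}). -/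
open scoped Classical

/-- `p`-adic valuation of a `p`-adic integer, with `v_p(0) = ⊤`. -/
noncomputable def vpZp (p : ℕ) [Fact p.Prime] (x : ℤ_[p]) : WithTop ℤ :=
  if x = 0 then ⊤ else (x.valuation : WithTop ℤ)

/-!
Around each `x₀ ∈ ℤ_p`, write `f(x) = ∑ aₖ (x - x₀)ᵏ` and let `l` be the index of the first
nonzero coefficient. Convergence at one point bounds `‖aₖ‖ ρ₀ᵏ`, so on a small enough ball the
tail `∑_{k > l}` is strictly smaller in norm than the leading term, and the ultrametric
inequality gives `v(f(x)) = v(a_l) + l · v(x - x₀)`; this is constant when `l = 0` (or when `f`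
vanishes near `x₀`). A Lebesgue number of the resulting cover of the compact space `ℤ_p` yields
`m₀` such that each class modulo `p ^ m₀` lies in one of these balls.
-/

theorem exists_pos_forall_mul_pow_le_half_mul_pow {b : ℕ → ℝ} {ρ₀ C : ℝ} {l : ℕ}
    (hρ₀ : 0 < ρ₀) (hC : ∀ k, b k * ρ₀ ^ k ≤ C) (hb : ∀ k, 0 ≤ b k) (hbl : 0 < b l) :
    ∃ ρ > 0, ∀ u, 0 ≤ u → u ≤ ρ → ∀ k, l < k → b k * u ^ k ≤ b l / 2 * u ^ l := by
  have hC0 : 0 ≤ C := by simpa using (hb 0).trans (by simpa using hC 0)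
  set δ := min 1 (b l * ρ₀ ^ l / (2 * (C + 1)))
  have hδ1 : δ ≤ 1 := min_le_left _ _
  have hδ0 : 0 < δ := lt_min one_pos (by positivity)
  have hCδ : C * δ ≤ b l / 2 * ρ₀ ^ l := by
    have : δ * (2 * (C + 1)) ≤ b l * ρ₀ ^ l := by
      rw [← le_div_iff₀ (by positivity)]; exact min_le_right _ _
    nlinarith
  refine ⟨ρ₀ * δ, by positivity, fun u hu0 hu k hlk => ?_⟩
  obtain ⟨q, hq0, hqδ, rfl⟩ : ∃ q, 0 ≤ q ∧ q ≤ δ ∧ u = ρ₀ * q :=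
    ⟨u / ρ₀, by positivity, by rwa [div_le_iff₀' hρ₀], by field_simp⟩
  calc b k * (ρ₀ * q) ^ k = b k * ρ₀ ^ k * q ^ k := by ring
    _ ≤ C * q ^ (l + 1) :=
        mul_le_mul (hC k) (pow_le_pow_of_le_one hq0 (hqδ.trans hδ1) hlk) (by positivity) hC0
    _ = C * q * q ^ l := by ring
    _ ≤ C * δ * q ^ l := by gcongr
    _ ≤ b l / 2 * ρ₀ ^ l * q ^ l := by gcongr
    _ = b l / 2 * (ρ₀ * q) ^ l := by ring

theorem IsUltrametricDist.norm_eq_of_norm_sub_lt_right {E : Type*} [SeminormedAddCommGroup E]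
    [IsUltrametricDist E] {x y : E} (h : ‖x - y‖ < ‖y‖) : ‖x‖ = ‖y‖ := by
  simpa [max_eq_right h.le] using
    IsUltrametricDist.norm_add_eq_max_of_norm_ne_norm h.ne (x := x - y)

theorem norm_eq_norm_leading_term_of_hasSum {K : Type*} [NormedField K] [IsUltrametricDist K]
    {a : ℕ → K} {l : ℕ} {c : ℝ} {t s : K}
    (hlow : ∀ k < l, a k = 0) (hc₀ : 0 ≤ c) (hc : c < ‖a l‖)
    (hhigh : ∀ k, l < k → ‖a k * t ^ k‖ ≤ c * ‖t‖ ^ l)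
    (hs : HasSum (fun k => a k * t ^ k) s) : ‖s‖ = ‖a l * t ^ l‖ := by
  have hrest : ‖s - a l * t ^ l‖ ≤ c * ‖t‖ ^ l := by
    rw [← ((hs.sub (hasSum_ite_eq l (a l * t ^ l))).tsum_eq)]
    refine IsUltrametricDist.norm_tsum_le_of_forall_le_of_nonneg (by positivity) fun k => ?_
    rcases lt_trichotomy k l with hkl | rfl | hlk
    · simp only [hlow k hkl, zero_mul, hkl.ne, ↓reduceIte, sub_self, norm_zero]
      positivity
    · simp only [↓reduceIte, sub_self, norm_zero]
      positivity
    · simpa [hlk.ne'] using hhigh k hlk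
  rcases (pow_nonneg (norm_nonneg t) l).eq_or_lt with ht | ht
  · rw [← ht, mul_zero, norm_le_zero_iff, sub_eq_zero] at hrest
    rw [hrest]
  · refine IsUltrametricDist.norm_eq_of_norm_sub_lt_right (hrest.trans_lt ?_)
    rw [norm_mul, norm_pow]
    gcongr

theorem exists_norm_eq_norm_monomial_of_hasSum {K : Type*} [NontriviallyNormedField K]
    [IsUltrametricDist K] {f : K → K} {x₀ : K} {r : ℝ} {a : ℕ → K} (hr : 0 < r)
    (hs : ∀ x, ‖x - x₀‖ ≤ r → HasSum (fun n => a n * (x - x₀) ^ n) (f x)) :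
    ∃ c : K, ∃ l : ℕ, ∃ ρ > 0, ∀ x, ‖x - x₀‖ ≤ ρ → ‖f x‖ = ‖c * (x - x₀) ^ l‖ := by
  by_cases ha : ∀ k, a k = 0
  · refine ⟨0, 0, r, hr, fun x hx => ?_⟩
    have hsum : HasSum (fun n => a n * (x - x₀) ^ n) 0 := by
      simpa only [ha, zero_mul] using hasSum_zero
    rw [(hs x hx).unique hsum, zero_mul]
  push Not at ha
  set l := Nat.find ha
  have hal : 0 < ‖a l‖ := norm_pos_iff.2 (Nat.find_spec ha)
  obtain ⟨t₀, ht₀, ht₀r⟩ := NormedField.exists_norm_lt K hr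
  obtain ⟨C, hC⟩ : BddAbove (Set.range fun k => ‖a k‖ * ‖t₀‖ ^ k) := by
    have hterms := (hs (x₀ + t₀) (by simpa using ht₀r.le)).summable.tendsto_atTop_zero.norm
    simpa using hterms.bddAbove_range
  obtain ⟨ρ, hρ, hhigh⟩ := exists_pos_forall_mul_pow_le_half_mul_pow ht₀
    (fun k => hC ⟨k, rfl⟩) (fun k => norm_nonneg (a k)) hal
  refine ⟨a l, l, min ρ r, lt_min hρ hr, fun x hx => ?_⟩
  refine norm_eq_norm_leading_term_of_hasSum (fun k hk => not_not.1 (Nat.find_min ha hk))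
    (by positivity) (half_lt_self hal) (fun k hk => ?_) (hs x (hx.trans (min_le_right _ _)))
  simpa using hhigh _ (norm_nonneg _) (hx.trans (min_le_left _ _)) k hk

section Valuation

variable {p : ℕ} [Fact p.Prime]

theorem vpQp_mul_pow (c t : ℚ_[p]) (l : ℕ) :
    vpQp p (c * t ^ l) = vpQp p c + (l : ℤ) * vpQp p t := by
  by_cases hc : c = 0
  · simp [vpQp, hc]
  rcases eq_or_ne t 0 with rfl | ht
  · rcases Nat.eq_zero_or_pos l with rfl | hl
    · simp
    · simp [vpQp, hl.ne', WithTop.mul_top]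
  simp [vpQp, hc, ht, Padic.valuation_mul hc (pow_ne_zero l ht), Padic.valuation_pow]

theorem vpQp_eq_of_norm_eq {x y : ℚ_[p]} (h : ‖x‖ = ‖y‖) : vpQp p x = vpQp p y := by
  by_cases hx : x = 0
  · rw [hx, norm_zero, eq_comm, norm_eq_zero] at h; simp [hx, h]
  have hy : y ≠ 0 := by rintro rfl; simp_all
  rw [Padic.norm_eq_zpow_neg_valuation hx, Padic.norm_eq_zpow_neg_valuation hy,
    zpow_right_inj₀ (by exact_mod_cast (Fact.out : p.Prime).pos)
      (by exact_mod_cast (Fact.out : p.Prime).ne_one), neg_inj] at h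
  simp [vpQp, hx, hy, h]

theorem vpZp_eq_vpQp (x : ℤ_[p]) : vpZp p x = vpQp p x := by
  simp [vpZp, vpQp, PadicInt.valuation_coe]

theorem PadicInt.norm_natCast_sub_le_of_modEq {m n a : ℕ} (h : n ≡ a [MOD p ^ m]) :
    ‖(n : ℤ_[p]) - a‖ ≤ (p : ℝ) ^ (-m : ℤ) := by
  have hdvd : ((p ^ m : ℕ) : ℤ) ∣ (n : ℤ) - a := Nat.modEq_iff_dvd.1 h.symm
  have hnorm := PadicInt.norm_int_le_pow_iff_dvd (p := p) (n := m) |>.2 (by exact_mod_cast hdvd)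
  simpa using hnorm

theorem LocallyAnalyticOn.exists_vpQp_eq {f : ℚ_[p] → ℚ_[p]} (hf : LocallyAnalyticOn p f)
    (x₀ : ℤ_[p]) : ∃ c : ℚ_[p], ∃ l : ℕ, ∃ ρ > 0, ∀ y : ℤ_[p], ‖y - x₀‖ < ρ →
      vpQp p (f y) = vpQp p c + (l : ℤ) * vpZp p (y - x₀) := by
  obtain ⟨r, hr, a, hs⟩ := hf x₀
  obtain ⟨c, l, ρ, hρ, hloc⟩ := exists_norm_eq_norm_monomial_of_hasSum hr hs
  refine ⟨c, l, ρ, hρ, fun y hy => ?_⟩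
  rw [vpZp_eq_vpQp, ← vpQp_mul_pow, PadicInt.coe_sub]
  exact vpQp_eq_of_norm_eq (hloc y (by rw [← PadicInt.coe_sub, ← PadicInt.norm_def]; exact hy.le))

end Valuation

theorem stmt5 (p : ℕ) [Fact p.Prime] (f : ℚ_[p] → ℚ_[p]) (hf : LocallyAnalyticOn p f) :
    ∃ m₀ : ℕ, 0 < m₀ ∧
      ∀ a : ℕ, ¬ ConstantClassP p (fun n => f (n : ℚ_[p])) a (p ^ m₀) →
        ∃ β : ℤ, ∃ l : ℕ, 0 < l ∧ ∃ x₀ : ℤ_[p],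
          ∀ n : ℕ, inClass a (p ^ m₀) n →
            vpQp p (f (n : ℚ_[p])) =
              (β : WithTop ℤ) + ((l : ℤ) : WithTop ℤ) * vpZp p ((n : ℤ_[p]) - x₀) := by
  choose c l ρ hρ hloc using hf.exists_vpQp_eq
  obtain ⟨δ, hδ, hcover⟩ := lebesgue_number_lemma_of_metric isCompact_univ
    (fun x => Metric.isOpen_ball) (fun y _ => Set.mem_iUnion.2 ⟨y, Metric.mem_ball_self (hρ y)⟩)
  obtain ⟨m₀, hm₀, hm₀δ⟩ := ((Filter.eventually_gt_atTop 0).and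
    ((tendsto_pow_atTop_nhds_zero_of_lt_one (by positivity)
      (inv_lt_one_of_one_lt₀ (Nat.one_lt_cast.2 (Fact.out : p.Prime).one_lt))).eventually
        (gt_mem_nhds hδ))).exists
  refine ⟨m₀, hm₀, fun a hnc => ?_⟩
  obtain ⟨x₀, hx₀⟩ := hcover a (Set.mem_univ _)
  have hclass : ∀ n, inClass a (p ^ m₀) n →
      vpQp p (f n) = vpQp p (c x₀) + (l x₀ : ℤ) * vpZp p (n - x₀) := fun n hn =>
    hloc x₀ n (hx₀ (by
      rw [Metric.mem_ball, dist_eq_norm]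
      refine (PadicInt.norm_natCast_sub_le_of_modEq hn.2).trans_lt ?_
      rwa [zpow_neg, zpow_natCast, ← inv_pow]))
  by_cases hconst : c x₀ = 0 ∨ l x₀ = 0
  -- in `WithTop ℤ`, `⊤ + w = ⊤` and `0 * w = 0`, so `hclass` has a constant right side
  · refine absurd ⟨vpQp p (c x₀), fun n hn => ?_⟩ hnc
    rw [hclass n hn]
    rcases hconst with h | h <;> simp [h, vpQp]
  push Not at hconst
  refine ⟨(c x₀).valuation, l x₀, Nat.pos_of_ne_zero hconst.2, x₀, fun n hn => ?_⟩
  simpa [vpQp, hconst.1] using hclass n hn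
end

section
/- Let p be a prime and let f : ℚ_p → ℚ_p be locally analytic on ℤ_p. Then the set of isolated zeros of f in ℤ_p is finite, and there exists a positive integer m₀ such that for every integer m ≥ m₀ the number of congruence classes modulo p^m that are non-constant with respect to the sequence (f(n))_{n∈ℕ₊} and the prime p equals the number of isolated zeros of f in ℤ_p. -/
open scoped Classical

/-- `x₀ ∈ ℤ_p` is an isolated zero of `f`: `f(x₀) = 0` and there is a neighbourhood of `x₀`
in `ℤ_p` in which `x₀` is the only zero of `f`. -/
def IsolatedZeroOn (p : ℕ) [Fact p.Prime] (f : ℚ_[p] → ℚ_[p]) (x₀ : ℤ_[p]) : Prop :=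
  f (x₀ : ℚ_[p]) = 0 ∧ ∃ U ∈ nhds x₀, ∀ x ∈ U, f (x : ℚ_[p]) = 0 → x = x₀

/-! Near any point `x` of `ℤ_p`, an analytic `f` either vanishes identically or satisfies
`‖f z‖ = c ‖z - x‖ ^ k` with `c > 0`. By compactness, once `p ^ (-m)` is below a Lebesgue number
of these neighbourhoods, every residue class `a + p ^ m ℤ_p` contains at most one isolated zero,
and `‖f‖` is constant on it when it contains none, so such a class is constant. Conversely, the
positive integers in the class of an isolated zero `x` accumulate at `x`, where `f` tends to `0`
without vanishing, so that class is not constant. Hence `x ↦ x mod p ^ m` is a bijection from the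
isolated zeros onto the non-constant classes. -/

open Filter Metric Topology FormalMultilinearSeries

theorem ContinuousAt.eventually_norm_eq {X E : Type*} [TopologicalSpace X]
    [NormedAddCommGroup E] [IsUltrametricDist E] {g : X → E} {x : X} (hg : ContinuousAt g x)
    (hgx : g x ≠ 0) : ∀ᶠ z in 𝓝 x, ‖g z‖ = ‖g x‖ :=
  hg.eventually_mem ((IsUltrametricDist.isOpen_sphere (0 : E) (norm_ne_zero_iff.mpr hgx)).mem_nhds
    (by simp)) |>.mono fun _ ↦ mem_sphere_zero_iff_norm.mp

theorem AnalyticAt.eventually_eq_zero_or_eventually_norm_eq_pow_mul {𝕜 E : Type*}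
    [NontriviallyNormedField 𝕜] [NormedAddCommGroup E] [NormedSpace 𝕜 E] [IsUltrametricDist E]
    {f : 𝕜 → E} {x : 𝕜} (hf : AnalyticAt 𝕜 f x) :
    (∀ᶠ z in 𝓝 x, f z = 0) ∨ ∃ k : ℕ, ∃ c > 0, ∀ᶠ z in 𝓝 x, ‖f z‖ = ‖z - x‖ ^ k * c := by
  by_cases htop : analyticOrderAt f x = ⊤
  · exact .inl (analyticOrderAt_eq_top.mp htop)
  obtain ⟨k, hk⟩ := ENat.ne_top_iff_exists.mp htop
  obtain ⟨g, hg, hgx, hfg⟩ := hf.analyticOrderAt_eq_natCast.mp hk.symm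
  refine .inr ⟨k, ‖g x‖, norm_pos_iff.mpr hgx, ?_⟩
  filter_upwards [hfg, hg.continuousAt.eventually_norm_eq hgx] with z hz hgz
  rw [hz, norm_smul, norm_pow, hgz]

theorem analyticAt_of_forall_norm_sub_le_hasSum {𝕜 : Type*} [NontriviallyNormedField 𝕜]
    {f : 𝕜 → 𝕜} {a : ℕ → 𝕜} {x₀ : 𝕜} {r : ℝ} (hr : 0 < r)
    (hf : ∀ x, ‖x - x₀‖ ≤ r → HasSum (fun n ↦ a n * (x - x₀) ^ n) (f x)) :
    AnalyticAt 𝕜 f x₀ := by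
  obtain ⟨w, hw0, hwr⟩ := NormedField.exists_norm_lt 𝕜 hr
  have hsum (y : 𝕜) (hy : ‖y‖ ≤ r) : HasSum (fun n ↦ a n * y ^ n) (f (x₀ + y)) := by
    simpa using hf (x₀ + y) (by simpa using hy)
  have hrad : (‖w‖₊ : ENNReal) ≤ (ofScalars 𝕜 a).radius := by
    refine (ofScalars 𝕜 a).le_radius_of_tendsto (l := 0) ?_
    simpa [norm_mul, norm_pow] using (hsum w hwr.le).summable.tendsto_atTop_zero.norm
  refine ⟨ofScalars 𝕜 a, ‖w‖₊, hrad, by simpa using hw0, fun {y} hy ↦ ?_⟩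
  have hyw : ‖y‖ < ‖w‖ := by simpa using hy
  simpa [ofScalars_apply_eq, mul_comm] using hsum y (hyw.le.trans hwr.le)

namespace PadicInt

variable {p : ℕ} [hp : Fact p.Prime]

theorem tendsto_zpow_neg_natCast_atTop :
    Tendsto (fun m : ℕ ↦ (p : ℝ) ^ (-(m : ℤ))) atTop (𝓝 0) := by
  simpa [zpow_neg, ← inv_pow] using tendsto_pow_atTop_nhds_zero_of_lt_one (r := (p : ℝ)⁻¹)
    (by positivity) (inv_lt_one_of_one_lt₀ (by exact_mod_cast hp.out.one_lt))

theorem dist_natCast_le_iff_modEq {a b m : ℕ} :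
    dist (a : ℤ_[p]) b ≤ p ^ (-(m : ℤ)) ↔ a ≡ b [MOD p ^ m] := by
  rw [dist_eq_norm, ← Int.cast_natCast, ← Int.cast_natCast (R := ℤ_[p]) b, ← Int.cast_sub,
    norm_int_le_pow_iff_dvd, Nat.modEq_iff_dvd, dvd_sub_comm]
  norm_cast

theorem dist_appr_le (x : ℤ_[p]) (m : ℕ) : dist x (x.appr m) ≤ p ^ (-(m : ℤ)) :=
  (dist_eq_norm x _).trans_le ((norm_le_pow_iff_mem_span_pow _ m).mpr (appr_spec m x))

theorem dist_natCast_le_iff_modEq_appr {x : ℤ_[p]} {n m : ℕ} :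
    dist (n : ℤ_[p]) x ≤ p ^ (-(m : ℤ)) ↔ n ≡ x.appr m [MOD p ^ m] := by
  rw [← dist_natCast_le_iff_modEq, ← mem_closedBall, ← mem_closedBall,
    IsUltrametricDist.closedBall_eq_of_mem (dist_appr_le x m)]

theorem appr_eq_of_dist_le {x : ℤ_[p]} {a m : ℕ} (ha : a < p ^ m)
    (h : dist x a ≤ p ^ (-(m : ℤ))) : x.appr m = a :=
  (Nat.mod_eq_of_lt (appr_lt x m)).symm.trans <|
    Nat.mod_eq_of_modEq (dist_natCast_le_iff_modEq_appr.mp (dist_comm x a ▸ h)).symm ha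

theorem frequently_natCast_modEq_appr (x : ℤ_[p]) (m : ℕ) :
    ∃ᶠ z in 𝓝[≠] x, ∃ n, inClass (x.appr m) (p ^ m) n ∧ (n : ℤ_[p]) = z := by
  rw [nhdsWithin_basis_ball.frequently_iff]
  intro ε hε
  obtain ⟨M, hMε, hmM⟩ := ((tendsto_zpow_neg_natCast_atTop (p := p)).eventually
    (gt_mem_nhds hε)).and (eventually_ge_atTop m) |>.exists
  -- witnesses `x.appr M + j * p ^ M` for `j = 1, 2`: distinct, so one of them is not `x`
  have hdist (j : ℕ) : dist ((x.appr M + j * p ^ M : ℕ) : ℤ_[p]) x ≤ p ^ (-(M : ℤ)) :=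
    dist_natCast_le_iff_modEq_appr.mpr (Nat.add_mul_mod_self_right _ _ _)
  have hmem (j : ℕ) (hj : 0 < j) (hne : ((x.appr M + j * p ^ M : ℕ) : ℤ_[p]) ≠ x) :
      ∃ z ∈ ball x ε ∩ {x}ᶜ, ∃ n, inClass (x.appr m) (p ^ m) n ∧ (n : ℤ_[p]) = z := by
    have hpos : 0 < x.appr M + j * p ^ M := by have := Nat.mul_pos hj (pow_pos hp.out.pos M); omega
    refine ⟨_, ⟨(hdist j).trans_lt hMε, hne⟩, _, ⟨hpos, ?_⟩, rfl⟩
    refine dist_natCast_le_iff_modEq_appr.mp ((hdist j).trans ?_)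
    exact zpow_le_zpow_right₀ (by exact_mod_cast hp.out.one_le) (by omega)
  by_cases h1 : ((x.appr M + 1 * p ^ M : ℕ) : ℤ_[p]) = x
  · refine hmem 2 two_pos fun h2 ↦ ?_
    have := Nat.cast_injective (h2.trans h1.symm)
    have := pow_pos hp.out.pos M
    omega
  · exact hmem 1 one_pos h1

instance nhdsNE_neBot (x : ℤ_[p]) : (𝓝[≠] x).NeBot :=
  (frequently_true_iff_neBot _).mp ((frequently_natCast_modEq_appr x 0).mono fun _ _ ↦ trivial)

end PadicInt

open PadicInt

section

variable {p : ℕ} [hp : Fact p.Prime] {f : ℚ_[p] → ℚ_[p]}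

theorem vpQp_eq_vpQp_iff {x y : ℚ_[p]} : vpQp p x = vpQp p y ↔ ‖x‖ = ‖y‖ := by
  unfold vpQp
  rcases eq_or_ne x 0 with rfl | hx <;> rcases eq_or_ne y 0 with rfl | hy
  · simp
  · simp [hy, eq_comm (a := (0 : ℝ))]
  · simp [hx]
  · rw [if_neg hx, if_neg hy, Padic.norm_eq_zpow_neg_valuation hx,
      Padic.norm_eq_zpow_neg_valuation hy, WithTop.coe_inj, zpow_right_inj₀
      (by exact_mod_cast hp.out.pos) (by exact_mod_cast hp.out.one_lt.ne'), neg_inj]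

theorem isolatedZeroOn_iff {x : ℤ_[p]} :
    IsolatedZeroOn p f x ↔ f x = 0 ∧ ∀ᶠ z : ℤ_[p] in 𝓝[≠] x, f z ≠ 0 := by
  rw [IsolatedZeroOn, eventually_nhdsWithin_iff, eventually_iff_exists_mem]
  simp only [Set.mem_compl_iff, Set.mem_singleton_iff, ← ne_eq, not_imp_not]

theorem LocallyAnalyticOn.analyticAt (hf : LocallyAnalyticOn p f) (x : ℤ_[p]) :
    AnalyticAt ℚ_[p] f x :=
  let ⟨_, hr, _, ha⟩ := hf x
  analyticAt_of_forall_norm_sub_le_hasSum hr ha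

theorem LocallyAnalyticOn.eventually_eq_zero_or_eventually_norm_eq_pow_mul
    (hf : LocallyAnalyticOn p f) (x : ℤ_[p]) :
    (∀ᶠ z : ℤ_[p] in 𝓝 x, f z = 0) ∨
      ∃ k : ℕ, ∃ c > 0, ∀ᶠ z : ℤ_[p] in 𝓝 x, ‖f z‖ = dist z x ^ k * c := by
  have hcoe := isOpenEmbedding_coe.continuous.tendsto x
  rcases (hf.analyticAt x).eventually_eq_zero_or_eventually_norm_eq_pow_mul with h | ⟨k, c, hc, h⟩
  · exact .inl (hcoe.eventually h)
  · exact .inr ⟨k, c, hc, hcoe.eventually h⟩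

theorem LocallyAnalyticOn.not_constantClassP_appr (hf : LocallyAnalyticOn p f) {x : ℤ_[p]}
    (hx : IsolatedZeroOn p f x) (m : ℕ) :
    ¬ ConstantClassP p (fun n ↦ f n) (x.appr m) (p ^ m) := by
  rintro ⟨t, ht⟩
  obtain ⟨hx0, hne⟩ := isolatedZeroOn_iff.mp hx
  have hlim : Tendsto (fun z : ℤ_[p] ↦ ‖f z‖) (𝓝[≠] x) (𝓝 0) := by
    have := (hf.analyticAt x).continuousAt.norm.tendsto.comp
      (isOpenEmbedding_coe.continuous.tendsto x)
    rw [hx0, norm_zero] at this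
    exact this.mono_left nhdsWithin_le_nhds
  have hclass := frequently_natCast_modEq_appr x m
  obtain ⟨_, ⟨n, hn, rfl⟩, hfn⟩ := (hclass.and_eventually hne).exists
  obtain ⟨_, ⟨n', hn', rfl⟩, hlt⟩ :=
    (hclass.and_eventually (hlim.eventually (gt_mem_nhds (norm_pos_iff.mpr hfn)))).exists
  exact hlt.ne (vpQp_eq_vpQp_iff.mp ((ht n' hn').trans (ht n hn).symm))

theorem constantClassP_of_forall_norm_eq {a m : ℕ}
    (h : ∀ z ∈ closedBall (a : ℤ_[p]) (p ^ (-(m : ℤ))), ‖f z‖ = ‖f a‖) :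
    ConstantClassP p (fun n ↦ f n) a (p ^ m) :=
  ⟨vpQp p (f a), fun n hn ↦ vpQp_eq_vpQp_iff.mpr (h n (dist_natCast_le_iff_modEq.mpr hn.2))⟩

def IsResolvingBall (p : ℕ) [Fact p.Prime] (f : ℚ_[p] → ℚ_[p]) (y : ℤ_[p]) (ρ : ℝ) : Prop :=
  ({s | IsolatedZeroOn p f s} ∩ closedBall y ρ).Subsingleton ∧
    ({s | IsolatedZeroOn p f s} ∩ closedBall y ρ = ∅ →
      ∀ z ∈ closedBall y ρ, ‖f (z : ℚ_[p])‖ = ‖f y‖)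

theorem not_isolatedZeroOn_of_eventually_eq_zero {s : ℤ_[p]}
    (h : ∀ᶠ z : ℤ_[p] in 𝓝 s, f z = 0) : ¬ IsolatedZeroOn p f s := fun hiso ↦
  let ⟨_, hne, hz⟩ :=
    ((isolatedZeroOn_iff.mp hiso).2.and (eventually_nhdsWithin_of_eventually_nhds h)).exists
  hne hz

section ResolvingBall

variable {x y : ℤ_[p]} {ε ρ : ℝ}

theorem isResolvingBall_of_forall_eq_zero (hzero : ∀ z ∈ ball x ε, f z = 0)
    (hB : closedBall y ρ ⊆ ball x ε) : IsResolvingBall p f y ρ := by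
  have hnone (s : ℤ_[p]) (hs : s ∈ ball x ε) : ¬ IsolatedZeroOn p f s :=
    not_isolatedZeroOn_of_eventually_eq_zero ((isOpen_ball.eventually_mem hs).mono hzero)
  refine ⟨fun s hs ↦ (hnone s (hB hs.2) hs.1).elim, fun _ z hz ↦ ?_⟩
  rw [hzero z (hB hz), hzero y (hB (mem_closedBall_self (dist_nonneg.trans hz)))]

theorem isResolvingBall_of_forall_norm_eq_pow_mul {k : ℕ} {c : ℝ} (hε : 0 < ε) (hc : 0 < c)
    (hnorm : ∀ z ∈ ball x ε, ‖f z‖ = dist z x ^ k * c) (hB : closedBall y ρ ⊆ ball x ε) :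
    IsResolvingBall p f y ρ := by
  have hzero_iff (z : ℤ_[p]) (hz : z ∈ ball x ε) : f z = 0 ↔ k ≠ 0 ∧ z = x := by
    rw [← norm_eq_zero, hnorm z hz, mul_eq_zero, pow_eq_zero_iff', dist_eq_zero]
    simp [hc.ne', and_comm]
  have heq (s : ℤ_[p]) (hs : s ∈ closedBall y ρ) (hiso : IsolatedZeroOn p f s) : s = x :=
    ((hzero_iff s (hB hs)).mp hiso.1).2
  have hx (hk : k ≠ 0) : IsolatedZeroOn p f x := by
    refine isolatedZeroOn_iff.mpr ⟨(hzero_iff x (mem_ball_self hε)).mpr ⟨hk, rfl⟩, ?_⟩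
    filter_upwards [eventually_nhdsWithin_of_eventually_nhds
      (isOpen_ball.eventually_mem (mem_ball_self hε)), self_mem_nhdsWithin] with z hz hzx
    exact fun h0 ↦ hzx ((hzero_iff z hz).mp h0).2
  refine ⟨fun s hs t ht ↦ (heq s hs.2 hs.1).trans (heq t ht.2 ht.1).symm, fun hempty z hz ↦ ?_⟩
  rw [hnorm z (hB hz), hnorm y (hB (mem_closedBall_self (dist_nonneg.trans hz)))]
  rcases eq_or_ne k 0 with rfl | hk
  · simp
  have hxy : ρ < dist y x := by
    by_contra! hxy
    exact hempty.subset ⟨hx hk, by rwa [mem_closedBall, dist_comm]⟩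
  rw [IsUltrametricDist.dist_eq_max_of_dist_ne_dist z y x (hz.trans_lt hxy).ne,
    max_eq_right (hz.trans hxy.le)]

end ResolvingBall

theorem LocallyAnalyticOn.exists_isResolvingBall (hf : LocallyAnalyticOn p f) (x : ℤ_[p]) :
    ∃ ε > 0, ∀ y ρ, closedBall y ρ ⊆ ball x ε → IsResolvingBall p f y ρ := by
  rcases hf.eventually_eq_zero_or_eventually_norm_eq_pow_mul x with h | ⟨k, c, hc, h⟩
  · obtain ⟨ε, hε, hzero⟩ := eventually_nhds_iff_ball.mp h
    exact ⟨ε, hε, fun y ρ ↦ isResolvingBall_of_forall_eq_zero hzero⟩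
  · obtain ⟨ε, hε, hnorm⟩ := eventually_nhds_iff_ball.mp h
    exact ⟨ε, hε, fun y ρ ↦ isResolvingBall_of_forall_norm_eq_pow_mul hε hc hnorm⟩

theorem LocallyAnalyticOn.eventually_isResolvingBall (hf : LocallyAnalyticOn p f) :
    ∀ᶠ m : ℕ in atTop, ∀ y : ℤ_[p], IsResolvingBall p f y (p ^ (-(m : ℤ))) := by
  choose ε hε hres using hf.exists_isResolvingBall
  obtain ⟨δ, hδ, hleb⟩ := lebesgue_number_lemma_of_metric isCompact_univ (fun x ↦ isOpen_ball)
    fun z _ ↦ Set.mem_iUnion.2 ⟨z, mem_ball_self (hε z)⟩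
  filter_upwards [(tendsto_zpow_neg_natCast_atTop (p := p)).eventually (gt_mem_nhds hδ)] with m hm y
  obtain ⟨x, hx⟩ := hleb y (Set.mem_univ y)
  exact hres x y _ ((closedBall_subset_ball hm).trans hx)

variable {m : ℕ}

theorem injOn_appr_of_isResolvingBall (hres : ∀ y, IsResolvingBall p f y (p ^ (-(m : ℤ)))) :
    {x | IsolatedZeroOn p f x}.InjOn (·.appr m) := fun x hx y hy hxy ↦
  (hres (x.appr m)).1 ⟨hx, dist_appr_le x m⟩ ⟨hy, by simpa [hxy] using dist_appr_le y m⟩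

theorem LocallyAnalyticOn.image_appr_isolatedZeros (hf : LocallyAnalyticOn p f)
    (hres : ∀ y, IsResolvingBall p f y (p ^ (-(m : ℤ)))) :
    (·.appr m) '' {x | IsolatedZeroOn p f x} =
      {a | a < p ^ m ∧ ¬ ConstantClassP p (fun n ↦ f n) a (p ^ m)} := by
  ext a
  constructor
  · rintro ⟨x, hx, rfl⟩
    exact ⟨appr_lt x m, hf.not_constantClassP_appr hx m⟩
  · rintro ⟨ha, hnc⟩
    by_contra hnot
    refine hnc (constantClassP_of_forall_norm_eq ((hres a).2 ?_))
    exact Set.eq_empty_of_forall_notMem fun x ⟨hx, hxa⟩ ↦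
      hnot ⟨x, hx, appr_eq_of_dist_le ha hxa⟩

end

theorem stmt6 (p : ℕ) [Fact p.Prime] (f : ℚ_[p] → ℚ_[p]) (hf : LocallyAnalyticOn p f) :
    {x : ℤ_[p] | IsolatedZeroOn p f x}.Finite ∧
    ∃ m₀ : ℕ, 0 < m₀ ∧ ∀ m : ℕ, m₀ ≤ m →
      {a : ℕ | a < p ^ m ∧ ¬ ConstantClassP p (fun n => f (n : ℚ_[p])) a (p ^ m)}.ncard =
        {x : ℤ_[p] | IsolatedZeroOn p f x}.ncard := by
  obtain ⟨m₀, hm₀⟩ :=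
    (hf.eventually_isResolvingBall.and (eventually_gt_atTop 0)).exists_forall_of_atTop
  have hinj (m : ℕ) (hm : m₀ ≤ m) := injOn_appr_of_isResolvingBall (hm₀ m hm).1
  have himage (m : ℕ) (hm : m₀ ≤ m) := hf.image_appr_isolatedZeros (hm₀ m hm).1
  refine ⟨Set.Finite.of_finite_image ?_ (hinj m₀ le_rfl), m₀, (hm₀ m₀ le_rfl).2, fun m hm ↦ ?_⟩
  · rw [himage m₀ le_rfl]
    exact (Set.finite_lt_nat _).subset fun a ha ↦ ha.1
  · rw [← himage m hm, (hinj m hm).ncard_image]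
end

section
/- Let k and a be positive integers and p a prime with a < k < p. Then there exists a positive integer m₀ such that for every positive integer n with n ≡ a (mod p^{m₀−1}(p−1)) and n ≠ a, one has v_p(S(n,k)) = v_p(S(a + p^{m₀−1}(p−1), k)) + v_p(n − a) − m₀ + 1. -/
/-- `p`-adic valuation of a rational number, with `v_p(0) = ⊤`. -/
noncomputable def vpQ (p : ℕ) (x : ℚ) : WithTop ℤ :=
  if x = 0 then ⊤ else (padicValRat p x : WithTop ℤ)

/-- The Stirling number of the second kind `S(n,k)`, as the rational number satisfying
`k! * S(n,k) = ∑_{j=1}^{k} (-1)^(k-j) * C(k,j) * j^n`. -/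
noncomputable def stirl (n k : ℕ) : ℚ :=
  (∑ j ∈ Finset.Icc 1 k, (-1 : ℚ) ^ (k - j) * (k.choose j) * (j : ℚ) ^ n) / (k.factorial : ℚ)

/-!
Put `c j = (-1)^(k-j) * C(k,j) * j^a`, so that `k! * S(a + m, k) = ∑ c j * j^m` and, as `a < k`,
`∑ c j = 0`. For `m = (p-1) s` every `y j = j^m` is `≡ 1 mod p^(v_p(s)+1)`, so to second order
`∑ c j * (y j - 1) ≡ X^s - Y^s  (mod p^(2 v_p(s) + 2))`, where `X / Y = ∏ j^((p-1) c j)` with the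
exponents split by sign. Lifting the exponent gives `v_p(X^s - Y^s) = v_p(X - Y) + v_p(s)`, and
`X ≠ Y` because a Bertrand prime `q ∈ (k/2, k]` divides only the factor `j = q`. So with
`m₀ = v_p(X - Y) ≥ 1` we get `v_p(k! S(a + (p-1) s, k)) = m₀ + v_p(s)` whenever
`v_p(s) ≥ m₀ - 1`, which is the claimed formula.
-/

open Finset

theorem sum_Icc_neg_one_pow_mul_choose_mul_pow_eq_zero {R : Type*} [CommRing R] {k a : ℕ}
    (ha : a ≠ 0) (hak : a < k) :
    ∑ j ∈ Icc 1 k, (-1 : R) ^ (k - j) * k.choose j * (j : R) ^ a = 0 := by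
  have h := congr_fun (fwdDiff_iter_pow_eq_zero_of_lt (R := R) hak) 0
  rw [fwdDiff_iter_eq_sum_shift, Nat.range_succ_eq_Icc_zero,
    ← insert_Icc_succ_left_eq_Icc k.zero_le, sum_insert (by simp)] at h
  simpa [ha] using h

section SquareCongruence

variable {R : Type*} [CommRing R] {d : R}

theorem sq_dvd_pow_sub_one_sub_mul {y : R} (h : d ∣ y - 1) (e : ℕ) :
    d ^ 2 ∣ y ^ e - 1 - e * (y - 1) := by
  have key := sq_dvd_add_pow_sub_sub (y - 1) 1 e
  rw [one_pow, one_mul, one_pow, add_sub_cancel] at key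
  exact (pow_dvd_pow_of_dvd h 2).trans (by convert key using 1; ring)

theorem sq_dvd_prod_pow_sub_one_sub_sum {ι : Type*} {s : Finset ι} {y : ι → R}
    (h : ∀ i ∈ s, d ∣ y i - 1) (e : ι → ℕ) :
    d ^ 2 ∣ ∏ i ∈ s, y i ^ e i - 1 - ∑ i ∈ s, (e i : R) * (y i - 1) := by
  classical
  induction s using Finset.induction_on with
  | empty => simp
  | insert i s hi ih =>
    have hyi := h i (mem_insert_self i s)
    replace ih := ih fun j hj ↦ h j (mem_insert_of_mem hj)
    set P := ∏ j ∈ s, y j ^ e j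
    set S := ∑ j ∈ s, (e j : R) * (y j - 1)
    have hP : d ∣ P - 1 := by
      have hS : d ∣ S := dvd_sum fun j hj ↦ dvd_mul_of_dvd_right (h j (mem_insert_of_mem hj)) _
      simpa using dvd_add ((dvd_pow_self d two_ne_zero).trans ih) hS
    have hyie : d ^ 2 ∣ (y i ^ e i - 1) * (P - 1) :=
      sq d ▸ mul_dvd_mul (hyi.trans (sub_one_dvd_pow_sub_one _ _)) hP
    rw [prod_insert hi, sum_insert hi]
    convert dvd_add (dvd_add hyie (sq_dvd_pow_sub_one_sub_mul hyi (e i))) ih using 1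
    ring

end SquareCongruence

theorem Int.ModEq.pow_sub_one_of_not_dvd {p j : ℕ} (hp : p.Prime) (hj : ¬p ∣ j) :
    (j : ℤ) ^ (p - 1) ≡ 1 [ZMOD p] :=
  Int.ModEq.pow_card_sub_one_eq_one hp <|
    Nat.isCoprime_iff_coprime.2 ((hp.coprime_iff_not_dvd.2 hj).symm)

/-- With `ρ = ∏ j ^ c j`, `ρ ^ (p - 1) = posPartProd p S c / posPartProd p S (-c)`. -/
def posPartProd (p : ℕ) (S : Finset ℕ) (c : ℕ → ℤ) : ℕ := ∏ j ∈ S, j ^ ((p - 1) * (c j).toNat)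

theorem posPartProd_modEq_one {p : ℕ} (hp : p.Prime) {S : Finset ℕ} (hS : ∀ j ∈ S, ¬p ∣ j)
    (c : ℕ → ℤ) : (posPartProd p S c : ℤ) ≡ 1 [ZMOD p] := by
  rw [posPartProd, Nat.cast_prod, ← prod_const_one (s := S) (M := ℤ)]
  refine Int.ModEq.prod fun j hj ↦ ?_
  rw [Nat.cast_pow, pow_mul]
  simpa using (Int.ModEq.pow_sub_one_of_not_dvd hp (hS j hj)).pow (c j).toNat

theorem dvd_posPartProd_sub {p : ℕ} (hp : p.Prime) {S : Finset ℕ} (hS : ∀ j ∈ S, ¬p ∣ j)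
    (c : ℕ → ℤ) : (p : ℤ) ∣ (posPartProd p S c : ℤ) - posPartProd p S (-c) :=
  ((posPartProd_modEq_one hp hS (-c)).trans (posPartProd_modEq_one hp hS c).symm).dvd

theorem factorization_posPartProd {p q : ℕ} (hq : q.Prime) {S : Finset ℕ} (h0 : 0 ∉ S)
    (hqS : q ∈ S) (hS : ∀ j ∈ S, q ∣ j → j = q) (c : ℕ → ℤ) :
    (posPartProd p S c).factorization q = (p - 1) * (c q).toNat := by
  rw [posPartProd, Nat.factorization_prod fun j hj ↦ pow_ne_zero _ (ne_of_mem_of_not_mem hj h0),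
    Finsupp.finsetSum_apply, sum_eq_single_of_mem q hqS fun j hj hjq ↦ ?_]
  · simp [hq.factorization_self]
  · simp [Nat.factorization_eq_zero_of_not_dvd fun h ↦ hjq (hS j hj h)]

theorem posPartProd_ne_posPartProd_neg {p q : ℕ} (hp : 2 ≤ p) (hq : q.Prime) {S : Finset ℕ}
    (h0 : 0 ∉ S) (hqS : q ∈ S) (hS : ∀ j ∈ S, q ∣ j → j = q) {c : ℕ → ℤ} (hc : c q ≠ 0) :
    posPartProd p S c ≠ posPartProd p S (-c) := by
  intro h
  have := congrArg (·.factorization q) h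
  simp only [factorization_posPartProd hq h0 hqS hS] at this
  have := Nat.eq_of_mul_eq_mul_left (by omega) this
  simp only [Pi.neg_apply] at this
  omega

theorem exists_prime_dvd_unique_Icc {k : ℕ} (hk : 2 ≤ k) :
    ∃ q, q.Prime ∧ q ∈ Icc 1 k ∧ ∀ j ∈ Icc 1 k, q ∣ j → j = q := by
  obtain ⟨q, hq, hkq, hqk⟩ := Nat.exists_prime_lt_and_le_two_mul (k / 2) (by omega)
  refine ⟨q, hq, mem_Icc.2 ⟨hq.one_lt.le, by omega⟩, fun j hj ⟨m, hm⟩ ↦ ?_⟩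
  rw [mem_Icc] at hj
  have : m < 2 := by
    by_contra!
    nlinarith [Nat.div_add_mod k 2, Nat.mod_lt k two_pos]
  interval_cases m <;> omega

theorem pow_succ_dvd_pow_mul_sub_one {p j : ℕ} (hp : p.Prime) (hj : ¬p ∣ j) (s : ℕ) :
    (p : ℤ) ^ (padicValNat p s + 1) ∣ (j : ℤ) ^ ((p - 1) * s) - 1 := by
  set v := padicValNat p s
  obtain ⟨t, hst⟩ : p ^ v ∣ s := pow_padicValNat_dvd
  have hfermat := dvd_sub_pow_of_dvd_sub (R := ℤ)
    (Int.ModEq.pow_sub_one_of_not_dvd hp hj).symm.dvd v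
  rw [one_pow] at hfermat
  rw [hst, ← mul_assoc, pow_mul, pow_mul]
  exact hfermat.trans (sub_one_dvd_pow_sub_one _ t)

theorem emultiplicity_sum_mul_pow {p : ℕ} (hp : p.Prime) (hp_odd : Odd p) {S : Finset ℕ}
    (hS : ∀ j ∈ S, ¬p ∣ j) {c : ℕ → ℤ} (hc : ∑ j ∈ S, c j = 0) {s : ℕ} (hs : s ≠ 0)
    (hν : emultiplicity (p : ℤ) ((posPartProd p S c : ℤ) - posPartProd p S (-c)) ≤
      padicValNat p s + 1) :
    emultiplicity (p : ℤ) (∑ j ∈ S, c j * (j : ℤ) ^ ((p - 1) * s)) =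
      emultiplicity (p : ℤ) ((posPartProd p S c : ℤ) - posPartProd p S (-c)) +
        padicValNat p s := by
  have := Fact.mk hp
  set v := padicValNat p s
  set y : ℕ → ℤ := fun j ↦ (j : ℤ) ^ ((p - 1) * s)
  have hy : ∀ j ∈ S, (p : ℤ) ^ (v + 1) ∣ y j - 1 := fun j hj ↦
    pow_succ_dvd_pow_mul_sub_one hp (hS j hj) s
  have hpow : ∀ d : ℕ → ℤ, (posPartProd p S d : ℤ) ^ s = ∏ j ∈ S, y j ^ (d j).toNat := by
    intro d
    simp only [posPartProd, Nat.cast_prod, Nat.cast_pow, ← prod_pow, y, ← pow_mul]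
    exact prod_congr rfl fun j _ ↦ by ring_nf
  have hsum : ∑ j ∈ S, c j * y j =
      ∑ j ∈ S, ((c j).toNat : ℤ) * (y j - 1) - ∑ j ∈ S, ((-c j).toNat : ℤ) * (y j - 1) := by
    rw [← sum_sub_distrib, ← sub_zero (∑ j ∈ S, c j * y j), ← hc, ← sum_sub_distrib]
    exact sum_congr rfl fun j _ ↦ by rw [← sub_mul, Int.toNat_sub_toNat_neg]; ring
  have hD : (p : ℤ) ^ (2 * v + 2) ∣
      (posPartProd p S c : ℤ) ^ s - posPartProd p S (-c) ^ s - ∑ j ∈ S, c j * y j := by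
    rw [hpow, hpow, hsum, show 2 * v + 2 = (v + 1) * 2 by ring, pow_mul]
    refine (dvd_sub (sq_dvd_prod_pow_sub_one_sub_sum hy fun j ↦ (c j).toNat)
      (sq_dvd_prod_pow_sub_one_sub_sum hy fun j ↦ (-c j).toNat)).trans (dvd_of_eq ?_)
    simp only [Pi.neg_apply]
    ring
  have hP : ¬(p : ℤ) ∣ posPartProd p S c := fun h ↦ hp.ne_one <| Nat.dvd_one.mp <|
    Int.natCast_dvd_natCast.mp <| by
      simpa using dvd_sub h (posPartProd_modEq_one hp hS c).symm.dvd
  have hLTE := Int.emultiplicity_pow_sub_pow hp hp_odd (dvd_posPartProd_sub hp hS c) hP s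
  rw [← padicValNat_eq_emultiplicity hs] at hLTE
  have hlt : emultiplicity (p : ℤ) ((posPartProd p S c : ℤ) ^ s - posPartProd p S (-c) ^ s) <
      emultiplicity (p : ℤ)
        ((posPartProd p S c : ℤ) ^ s - posPartProd p S (-c) ^ s - ∑ j ∈ S, c j * y j) := by
    refine lt_of_lt_of_le ?_ (le_emultiplicity_of_pow_dvd hD)
    rw [hLTE]
    calc _ ≤ (v + 1 + v : ℕ∞) := by gcongr
      _ < _ := by norm_cast; omega
  have := emultiplicity_sub_of_gt hlt
  rwa [sub_sub_cancel_left, emultiplicity_neg, hLTE] at this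

theorem vpQ_intCast {p : ℕ} (hp : p ≠ 1) {z : ℤ} {e : ℕ} (h : emultiplicity (p : ℤ) z = e) :
    vpQ p z = (e : ℤ) := by
  have hz : z ≠ 0 := by rintro rfl; simp at h
  rw [vpQ, if_neg (by exact_mod_cast hz), padicValRat.of_int_multiplicity hp hz,
    multiplicity_eq_of_emultiplicity_eq_some h]

theorem vpQ_natCast {p m : ℕ} (hm : m ≠ 0) : vpQ p m = (padicValNat p m : ℤ) := by
  rw [vpQ, if_neg (by exact_mod_cast hm), padicValRat.of_nat]

theorem vpQ_div_natCast {p : ℕ} [Fact p.Prime] (x : ℚ) {m : ℕ} (hm : ¬p ∣ m) :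
    vpQ p (x / m) = vpQ p x := by
  have hm0 : (m : ℚ) ≠ 0 := Nat.cast_ne_zero.2 fun h ↦ hm (h ▸ dvd_zero p)
  by_cases hx : x = 0
  · simp [hx]
  rw [vpQ, vpQ, if_neg (div_ne_zero hx hm0), if_neg hx, padicValRat.div hx hm0,
    padicValRat.of_nat, padicValNat.eq_zero_of_not_dvd hm]
  simp

def stirlingCoeff (k a j : ℕ) : ℤ := (-1) ^ (k - j) * k.choose j * (j : ℤ) ^ a

theorem stirlingCoeff_ne_zero {k a j : ℕ} (hj0 : j ≠ 0) (hjk : j ≤ k) : stirlingCoeff k a j ≠ 0 :=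
  mul_ne_zero (mul_ne_zero (by simp) (by exact_mod_cast (Nat.choose_pos hjk).ne'))
    (pow_ne_zero _ (by exact_mod_cast hj0))

theorem sum_stirlingCoeff_eq_zero {k a : ℕ} (ha : a ≠ 0) (hak : a < k) :
    ∑ j ∈ Icc 1 k, stirlingCoeff k a j = 0 :=
  sum_Icc_neg_one_pow_mul_choose_mul_pow_eq_zero ha hak

theorem stirl_add (k a m : ℕ) :
    stirl (a + m) k = (∑ j ∈ Icc 1 k, stirlingCoeff k a j * (j : ℤ) ^ m : ℤ) / k.factorial := by
  rw [stirl]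
  push_cast [stirlingCoeff, pow_add]
  simp only [mul_assoc]

theorem exists_vpQ_stirl_eq {p k a : ℕ} (hp : p.Prime) (ha : 0 < a) (hak : a < k) (hkp : k < p) :
    ∃ ν : ℕ, 0 < ν ∧ ∀ s ≠ 0, ν ≤ padicValNat p s + 1 →
      vpQ p (stirl (a + (p - 1) * s) k) = ((ν + padicValNat p s : ℕ) : ℤ) := by
  have := Fact.mk hp
  set c := stirlingCoeff k a
  have hS : ∀ j ∈ Icc 1 k, ¬p ∣ j := fun j hj h ↦ by
    rw [mem_Icc] at hj
    have := Nat.le_of_dvd (by omega) h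
    omega
  obtain ⟨q, hq, hqk, hqS⟩ := exists_prime_dvd_unique_Icc (k := k) (by omega)
  have hne : (posPartProd p (Icc 1 k) c : ℤ) - posPartProd p (Icc 1 k) (-c) ≠ 0 :=
    sub_ne_zero.2 <| Nat.cast_injective.ne <| posPartProd_ne_posPartProd_neg (by omega) hq
      (by simp) hqk hqS (stirlingCoeff_ne_zero hq.ne_zero (mem_Icc.1 hqk).2)
  have hfin := (Int.finiteMultiplicity_iff (a := p)).2 ⟨by simpa using hp.ne_one, hne⟩
  refine ⟨multiplicity (p : ℤ) ((posPartProd p (Icc 1 k) c : ℤ) - posPartProd p (Icc 1 k) (-c)),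
    multiplicity_pos_of_dvd (dvd_posPartProd_sub hp hS c), fun s hs hν ↦ ?_⟩
  rw [stirl_add, vpQ_div_natCast _ fun h ↦ by have := hp.dvd_factorial.1 h; omega]
  refine vpQ_intCast hp.ne_one ?_
  rw [Nat.cast_add, emultiplicity_sum_mul_pow hp (hp.odd_of_ne_two (by omega)) hS
    (sum_stirlingCoeff_eq_zero ha.ne' hak) hs
    (by rw [hfin.emultiplicity_eq_multiplicity]; exact_mod_cast hν),
    hfin.emultiplicity_eq_multiplicity]

theorem Nat.exists_ne_zero_eq_add_mul_of_modEq {n a M : ℕ} (haM : a < M) (h : n ≡ a [MOD M])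
    (hne : n ≠ a) : ∃ t ≠ 0, n = a + M * t := by
  have hmod : n % M = a := by rw [h, Nat.mod_eq_of_lt haM]
  refine ⟨n / M, fun ht ↦ hne ?_, ?_⟩
  · rw [← Nat.mod_add_div n M, ht, hmod, mul_zero, add_zero]
  · rw [← hmod, Nat.mod_add_div]

theorem padicValNat_sub_one_mul {p : ℕ} [Fact p.Prime] {s : ℕ} (hs : s ≠ 0) :
    padicValNat p ((p - 1) * s) = padicValNat p s := by
  have hp := (Fact.out : p.Prime).two_le
  have hp1 : ¬p ∣ p - 1 := fun h ↦ by have := Nat.le_of_dvd (by omega) h; omega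
  rw [padicValNat.mul (by omega) hs, padicValNat.eq_zero_of_not_dvd hp1, zero_add]

theorem stmt8 (p k a : ℕ) (hp : p.Prime) (ha : 0 < a) (hak : a < k) (hkp : k < p) :
    ∃ m₀ : ℕ, 0 < m₀ ∧
      ∀ n : ℕ, 0 < n → n ≡ a [MOD p ^ (m₀ - 1) * (p - 1)] → n ≠ a →
        vpQ p (stirl n k) =
          vpQ p (stirl (a + p ^ (m₀ - 1) * (p - 1)) k) + vpQ p ((n : ℚ) - (a : ℚ)) +
            ((1 - (m₀ : ℤ) : ℤ) : WithTop ℤ) := by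
  have := Fact.mk hp
  obtain ⟨ν, hν0, hν⟩ := exists_vpQ_stirl_eq hp ha hak hkp
  refine ⟨ν, hν0, fun n _ hmod hne ↦ ?_⟩
  have hpow : p ^ (ν - 1) ≠ 0 := pow_ne_zero _ hp.ne_zero
  obtain ⟨t, ht, rfl⟩ := Nat.exists_ne_zero_eq_add_mul_of_modEq
    ((show a < p - 1 by omega).trans_le (Nat.le_mul_of_pos_left _ (Nat.pos_of_ne_zero hpow)))
    hmod hne
  have hs : p ^ (ν - 1) * t ≠ 0 := mul_ne_zero hpow ht
  rw [show a + p ^ (ν - 1) * (p - 1) * t = a + (p - 1) * (p ^ (ν - 1) * t) by ring,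
    show a + p ^ (ν - 1) * (p - 1) = a + (p - 1) * (p ^ (ν - 1) * 1) by ring,
    hν _ hs (by simp [padicValNat.mul hpow ht]; omega), hν _ (by simpa using hpow) (by simp; omega),
    show ((a + (p - 1) * (p ^ (ν - 1) * t) : ℕ) : ℚ) - a = ((p - 1) * (p ^ (ν - 1) * t) : ℕ) by
      push_cast; ring,
    vpQ_natCast (mul_ne_zero (by omega) hs), padicValNat_sub_one_mul hs,
    padicValNat.mul hpow ht, mul_one, padicValNat.prime_pow,
    ← WithTop.coe_add, ← WithTop.coe_add, WithTop.coe_eq_coe]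
  push_cast
  omega
end

section
/- Let p be a prime, x₀ ∈ ℚ_p, l a positive integer, and (a_n)_{n≥l} a sequence in ℚ_p with a_l ≠ 0. Suppose r > 0 and f : ℚ_p → ℚ_p are such that for every x ∈ ℚ_p with |x − x₀|_p ≤ r the series ∑_{n≥l} a_n(x − x₀)^n converges with sum f(x). Then there exists a natural number m such that for every x ≠ x₀ with v_p(x − x₀) ≥ m one has v_p(f(x)) = v_p(a_l) + l·v_p(x − x₀). -/
/-!
Near `x₀` the leading term `a_l (x - x₀)^l` dominates the rest of the series. Convergence at one
point `z` with `|z - x₀| ≤ r` bounds `|a_n| |z - x₀|^n` by some `C`; if `|x - x₀| = ρ |z - x₀|`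
with `ρ ≤ 1`, every later term then has norm at most `C ρ^(l+1)`, and so (ultrametric inequality)
does the tail. Once `C ρ < |a_l| |z - x₀|^l`, this is smaller than `|a_l (x - x₀)^l|`, so
`|f x| = |a_l| |x - x₀|^l`, which is the claimed identity of valuations.
-/

open scoped Classical

open Filter Topology

section Ultrametric

variable {K : Type*}

lemma norm_hasSum_eq_norm_leading_term [NormedField K] [IsUltrametricDist K]
    {a : ℕ → K} {l : ℕ} {t y : K} {s C : ℝ}
    (hy : HasSum (fun n => a (n + l) * t ^ (n + l)) y)
    (hC : ∀ n, ‖a (n + l)‖ * s ^ (n + l) ≤ C) (hs : 0 < s) (ht : t ≠ 0) (hts : ‖t‖ ≤ s)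
    (hsmall : C * (‖t‖ / s) < ‖a l‖ * s ^ l) :
    ‖y‖ = ‖a l‖ * ‖t‖ ^ l := by
  set ρ := ‖t‖ / s
  have hρ : 0 < ρ := div_pos (norm_pos_iff.2 ht) hs
  have hρ1 : ρ ≤ 1 := (div_le_one hs).2 hts
  have hnorm (m : ℕ) : ‖a m * t ^ m‖ = ‖a m‖ * s ^ m * ρ ^ m := by
    rw [norm_mul, norm_pow, mul_assoc, ← mul_pow, mul_div_cancel₀ _ hs.ne']
  have htail : HasSum (fun n => a (n + 1 + l) * t ^ (n + 1 + l)) (y - a l * t ^ l) := by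
    simpa using (hasSum_nat_add_iff' 1).mpr hy
  have hterm (n : ℕ) : ‖a (n + 1 + l) * t ^ (n + 1 + l)‖ ≤ C * ρ ^ (l + 1) := by
    rw [hnorm]
    have hC0 : 0 ≤ C := (mul_nonneg (norm_nonneg _) (by positivity)).trans (hC 0)
    exact mul_le_mul (add_assoc n 1 l ▸ hC (n + 1))
      (pow_le_pow_of_le_one hρ.le hρ1 (by omega)) (by positivity) hC0
  have hlead : C * ρ ^ (l + 1) < ‖a l * t ^ l‖ := by
    rw [hnorm, pow_succ', ← mul_assoc]
    exact mul_lt_mul_of_pos_right hsmall (by positivity)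
  have hdiff : ‖y - a l * t ^ l‖ < ‖a l * t ^ l‖ :=
    (htail.tsum_eq ▸ IsUltrametricDist.norm_tsum_le_of_forall_le hterm).trans_lt hlead
  rw [← norm_pow, ← norm_mul, ← sub_add_cancel y (a l * t ^ l),
    IsUltrametricDist.norm_add_eq_max_of_norm_ne_norm hdiff.ne, max_eq_right hdiff.le]

lemma eventually_norm_eq_norm_leading_term [NontriviallyNormedField K] [IsUltrametricDist K]
    {a : ℕ → K} {l : ℕ} {r : ℝ} {f : K → K} (hr : 0 < r)
    (hf : ∀ t, ‖t‖ ≤ r → HasSum (fun n => a (n + l) * t ^ (n + l)) (f t)) (hal : a l ≠ 0) :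
    ∀ᶠ t in 𝓝[≠] 0, ‖f t‖ = ‖a l‖ * ‖t‖ ^ l := by
  obtain ⟨z, hz, hzr⟩ := NormedField.exists_norm_lt K hr
  obtain ⟨C, hC⟩ : ∃ C, ∀ n, ‖a (n + l)‖ * ‖z‖ ^ (n + l) ≤ C := by
    obtain ⟨C, hC⟩ := (hf z hzr.le).summable.tendsto_atTop_zero.norm.bddAbove_range
    exact ⟨C, fun n => by simpa only [norm_mul, norm_pow] using hC ⟨n, rfl⟩⟩
  have hnorm : Tendsto (‖·‖) (𝓝 (0 : K)) (𝓝 0) := tendsto_norm_zero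
  have hsmall : Tendsto (fun t : K => C * (‖t‖ / ‖z‖)) (𝓝 0) (𝓝 0) := by
    simpa using (hnorm.div_const ‖z‖).const_mul C
  filter_upwards [nhdsWithin_le_nhds (hnorm.eventually (eventually_le_nhds hz)),
    nhdsWithin_le_nhds (hsmall.eventually_lt_const (mul_pos (norm_pos_iff.2 hal) (pow_pos hz l))),
    self_mem_nhdsWithin] with t hts htsmall ht
  exact norm_hasSum_eq_norm_leading_term (hf t (hts.trans hzr.le)) hC hz ht hts htsmall

end Ultrametric

section Padic

variable {p : ℕ} [Fact p.Prime]

lemma vpQp_of_ne_zero {x : ℚ_[p]} (hx : x ≠ 0) : vpQp p x = x.valuation := if_neg hx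

lemma Padic.valuation_eq_of_norm_eq {x y : ℚ_[p]} (h : ‖x‖ = ‖y‖) :
    x.valuation = y.valuation := by
  rcases eq_or_ne x 0 with rfl | hx
  · rw [norm_zero, eq_comm, norm_eq_zero] at h
    rw [h]
  have hy : y ≠ 0 := norm_ne_zero_iff.1 (h ▸ norm_ne_zero_iff.2 hx)
  rw [Padic.norm_eq_zpow_neg_valuation hx, Padic.norm_eq_zpow_neg_valuation hy] at h
  have hp : (1 : ℝ) < p := mod_cast (Fact.out : p.Prime).one_lt
  simpa using zpow_right_injective₀ (by positivity) hp.ne' h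

lemma norm_le_inv_pow_of_le_vpQp {t : ℚ_[p]} {m : ℕ} (ht : t ≠ 0)
    (hm : (m : WithTop ℤ) ≤ vpQp p t) :
    ‖t‖ ≤ (p : ℝ)⁻¹ ^ m := by
  rw [vpQp_of_ne_zero ht] at hm
  have hp : (1 : ℝ) ≤ p := mod_cast (Fact.out : p.Prime).one_lt.le
  rw [Padic.norm_eq_zpow_neg_valuation ht, inv_pow, ← zpow_natCast, ← zpow_neg]
  exact zpow_le_zpow_right₀ hp (neg_le_neg (mod_cast hm))

lemma exists_forall_le_vpQp_of_eventually {P : ℚ_[p] → Prop} (h : ∀ᶠ t in 𝓝[≠] 0, P t) :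
    ∃ m : ℕ, ∀ t, t ≠ 0 → (m : WithTop ℤ) ≤ vpQp p t → P t := by
  obtain ⟨ε, hε, hball⟩ := Metric.mem_nhdsWithin_iff.1 h
  have hp : (1 : ℝ) < p := mod_cast (Fact.out : p.Prime).one_lt
  obtain ⟨m, hm⟩ := exists_pow_lt_of_lt_one hε (inv_lt_one_of_one_lt₀ hp)
  refine ⟨m, fun t ht hvt => hball ⟨?_, ht⟩⟩
  rw [Metric.mem_ball, dist_zero_right]
  exact (norm_le_inv_pow_of_le_vpQp ht hvt).trans_lt hm

end Padic

theorem stmt11_general (p : ℕ) [Fact p.Prime] (x₀ : ℚ_[p]) (l : ℕ)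
    (a : ℕ → ℚ_[p]) (hal : a l ≠ 0) (r : ℝ) (hr : 0 < r) (f : ℚ_[p] → ℚ_[p])
    -- for every `x` with `|x - x₀|_p ≤ r`, the series `∑_{n ≥ l} a_n (x - x₀)^n`
    -- converges with sum `f x`
    (hf : ∀ x : ℚ_[p], ‖x - x₀‖ ≤ r →
      HasSum (fun n : ℕ => a (n + l) * (x - x₀) ^ (n + l)) (f x)) :
    ∃ m : ℕ, ∀ x : ℚ_[p], x ≠ x₀ → (m : WithTop ℤ) ≤ vpQp p (x - x₀) →
      vpQp p (f x) = vpQp p (a l) + ((l : ℤ) : WithTop ℤ) * vpQp p (x - x₀) := by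
  have hf' (t : ℚ_[p]) (ht : ‖t‖ ≤ r) :
      HasSum (fun n => a (n + l) * t ^ (n + l)) (f (x₀ + t)) := by
    simpa using hf (x₀ + t) (by simpa using ht)
  obtain ⟨m, hm⟩ := exists_forall_le_vpQp_of_eventually
    (eventually_norm_eq_norm_leading_term hr hf' hal)
  refine ⟨m, fun x hx hvx => ?_⟩
  have ht : x - x₀ ≠ 0 := sub_ne_zero.2 hx
  have hnorm : ‖f x‖ = ‖a l * (x - x₀) ^ l‖ := by
    simpa [norm_mul, norm_pow] using hm (x - x₀) ht hvx
  have hlead : a l * (x - x₀) ^ l ≠ 0 := mul_ne_zero hal (pow_ne_zero l ht)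
  have hfx : f x ≠ 0 := norm_ne_zero_iff.1 (hnorm ▸ norm_ne_zero_iff.2 hlead)
  rw [vpQp_of_ne_zero hfx, vpQp_of_ne_zero hal, vpQp_of_ne_zero ht,
    Padic.valuation_eq_of_norm_eq hnorm, Padic.valuation_mul hal (pow_ne_zero l ht),
    Padic.valuation_pow]
  push_cast
  rfl

theorem stmt11 (p : ℕ) [Fact p.Prime] (x₀ : ℚ_[p]) (l : ℕ) (hl : 0 < l)
    (a : ℕ → ℚ_[p]) (hal : a l ≠ 0) (r : ℝ) (hr : 0 < r) (f : ℚ_[p] → ℚ_[p])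
    -- for every `x` with `|x - x₀|_p ≤ r`, the series `∑_{n ≥ l} a_n (x - x₀)^n`
    -- converges with sum `f x`
    (hf : ∀ x : ℚ_[p], ‖x - x₀‖ ≤ r →
      HasSum (fun n : ℕ => a (n + l) * (x - x₀) ^ (n + l)) (f x)) :
    ∃ m : ℕ, ∀ x : ℚ_[p], x ≠ x₀ → (m : WithTop ℤ) ≤ vpQp p (x - x₀) →
      vpQp p (f x) = vpQp p (a l) + ((l : ℤ) : WithTop ℤ) * vpQp p (x - x₀) :=
  stmt11_general p x₀ l a hal r hr f hf
end

section
/- Let p be an odd prime and let a ∈ ℤ_p with a ≡ 1 (mod p). Then there exists a continuous function g : ℤ_p → ℤ_p such that g(n) = a^n for every natural number n and g(x + y) = g(x)·g(y) for all x, y ∈ ℤ_p. -/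
/-!
The function is the Mahler series `g x = ∑ₖ (x choose k) (a - 1)ᵏ`, which converges uniformly
because `‖a - 1‖ < 1`. At natural `n` it is the binomial expansion of `((a - 1) + 1)ⁿ`, and
`g (x + y) = g x * g y` holds on the dense subset `ℕ × ℕ`, hence everywhere by continuity.
Mathlib packages this as the continuous additive character `PadicInt.addChar_of_value_at_one`.
-/

open Filter Topology

theorem stmt15_general (p : ℕ) [Fact p.Prime] (a : ℤ_[p])
    (ha : (p : ℤ_[p]) ∣ (a - 1)) :
    ∃ g : ℤ_[p] → ℤ_[p], Continuous g ∧ (∀ n : ℕ, g (n : ℤ_[p]) = a ^ n) ∧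
      ∀ x y : ℤ_[p], g (x + y) = g x * g y := by
  have hpow : Tendsto ((a - 1) ^ ·) atTop (𝓝 0) :=
    tendsto_pow_atTop_nhds_zero_of_norm_lt_one ((PadicInt.norm_lt_one_iff_dvd _).mpr ha)
  set κ := PadicInt.addChar_of_value_at_one (p := p) (a - 1) hpow
  have hκ_one : κ 1 = a := by
    rw [PadicInt.addChar_of_value_at_one_def, add_sub_cancel]
  refine ⟨κ, PadicInt.continuous_addChar_of_value_at_one hpow, fun n => ?_, κ.map_add_eq_mul⟩
  rw [← nsmul_one, κ.map_nsmul_eq_pow, hκ_one]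

theorem stmt15 (p : ℕ) [Fact p.Prime] (hp : p ≠ 2) (a : ℤ_[p])
    (ha : (p : ℤ_[p]) ∣ (a - 1)) :
    ∃ g : ℤ_[p] → ℤ_[p], Continuous g ∧ (∀ n : ℕ, g (n : ℤ_[p]) = a ^ n) ∧
      ∀ x y : ℤ_[p], g (x + y) = g x * g y :=
  stmt15_general p a ha
end

section
/- Let p be an odd prime, b ∈ ℤ_p and x ∈ ℤ_p. Then the sequence j ↦ b^j · (∏_{i=0}^{j−1}(x − i)) · p^j / j! is summable in ℚ_p, and if x = n for a natural number n then its sum ∑_{j=0}^∞ b^j · (∏_{i=0}^{j−1}(n − i)) · p^j / j! equals (1 + p·b)^n. -/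
/-!
Since `∏_{i<j} (x - i) = j! · choose x j` and `ℤ_[p]` is a binomial ring, the `j`-th term is
`b ^ j · choose x j · p ^ j` with `b ^ j · choose x j ∈ ℤ_[p]`; it has norm at most `p⁻ʲ`, so
the series converges. For `x = n` the binomial coefficients vanish beyond `j = n`, and the
sum is the binomial expansion of `(1 + p b) ^ n`.
-/

open Finset Nat

theorem Ring.prod_range_sub_eq_factorial_mul_choose {R : Type*} [CommRing R] [BinomialRing R]
    (r : R) (n : ℕ) : ∏ i ∈ range n, (r - i) = n ! * Ring.choose r n := by
  rw [← nsmul_eq_mul, ← Ring.descPochhammer_eq_factorial_smul_choose, ← Polynomial.aeval_eq_smeval,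
    Polynomial.aeval_def, ← Polynomial.eval_map, descPochhammer_map, descPochhammer_eval_eq_prod_range]

theorem hasSum_choose_mul_pow {R : Type*} [CommSemiring R] [TopologicalSpace R] (y : R) (n : ℕ) :
    HasSum (fun j => (n.choose j : R) * y ^ j) ((1 + y) ^ n) := by
  have hvanish : ∀ j ∉ range (n + 1), (n.choose j : R) * y ^ j = 0 := fun j hj => by
    rw [choose_eq_zero_of_lt (by simpa using hj), cast_zero, zero_mul]
  convert hasSum_sum_of_ne_finset_zero (L := .unconditional ℕ) hvanish using 1
  rw [add_comm, add_pow]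
  simp only [one_pow, mul_one, mul_comm]

theorem PadicInt.summable_coe_mul_p_pow {p : ℕ} [Fact p.Prime] (a : ℕ → ℤ_[p]) :
    Summable fun j => (a j : ℚ_[p]) * (p : ℚ_[p]) ^ j := by
  have hp : (1 : ℝ) < p := by exact_mod_cast (Fact.out : p.Prime).one_lt
  refine Summable.of_norm_bounded
    (summable_geometric_of_lt_one (by positivity) (inv_lt_one_of_one_lt₀ hp)) fun j => ?_
  rw [norm_mul, norm_pow, Padic.norm_p]
  exact mul_le_of_le_one_left (by positivity) (PadicInt.norm_le_one _)

theorem PadicInt.coe_pow_mul_prod_range_sub_mul_pow_div_factorial {p : ℕ} [Fact p.Prime]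
    (b x : ℤ_[p]) (c : ℚ_[p]) (j : ℕ) :
    (b : ℚ_[p]) ^ j * (∏ i ∈ range j, ((x : ℚ_[p]) - i)) * c ^ j / j ! =
      ((b ^ j * Ring.choose x j : ℤ_[p]) : ℚ_[p]) * c ^ j := by
  have hprod : ∏ i ∈ range j, ((x : ℚ_[p]) - i) = ((∏ i ∈ range j, (x - i) : ℤ_[p]) : ℚ_[p]) :=
    (map_prod PadicInt.Coe.ringHom (fun i : ℕ => x - i) (range j)).symm
  have hfac : (j ! : ℚ_[p]) ≠ 0 := Nat.cast_ne_zero.2 (factorial_ne_zero j)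
  rw [hprod, Ring.prod_range_sub_eq_factorial_mul_choose]
  push_cast
  field_simp

theorem stmt16_general (p : ℕ) [Fact p.Prime] (b x : ℤ_[p]) :
    Summable (fun j : ℕ =>
      ((b : ℚ_[p]) ^ j * (∏ i ∈ Finset.range j, ((x : ℚ_[p]) - (i : ℚ_[p]))) * (p : ℚ_[p]) ^ j /
        (j.factorial : ℚ_[p]))) ∧
    ∀ n : ℕ, x = (n : ℤ_[p]) →
      (∑' j : ℕ,
        ((b : ℚ_[p]) ^ j * (∏ i ∈ Finset.range j, ((x : ℚ_[p]) - (i : ℚ_[p]))) * (p : ℚ_[p]) ^ j /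
          (j.factorial : ℚ_[p]))) = (((1 + p * b : ℤ_[p]) : ℚ_[p])) ^ n := by
  simp only [PadicInt.coe_pow_mul_prod_range_sub_mul_pow_div_factorial]
  refine ⟨PadicInt.summable_coe_mul_p_pow _, ?_⟩
  rintro n rfl
  refine HasSum.tsum_eq ?_
  convert hasSum_choose_mul_pow ((p : ℚ_[p]) * b) n using 1
  · ext j
    push_cast [Ring.choose_natCast]
    ring
  · push_cast
    rfl

theorem stmt16 (p : ℕ) [Fact p.Prime] (hp : p ≠ 2) (b x : ℤ_[p]) :
    Summable (fun j : ℕ =>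
      ((b : ℚ_[p]) ^ j * (∏ i ∈ Finset.range j, ((x : ℚ_[p]) - (i : ℚ_[p]))) * (p : ℚ_[p]) ^ j /
        (j.factorial : ℚ_[p]))) ∧
    ∀ n : ℕ, x = (n : ℤ_[p]) →
      (∑' j : ℕ,
        ((b : ℚ_[p]) ^ j * (∏ i ∈ Finset.range j, ((x : ℚ_[p]) - (i : ℚ_[p]))) * (p : ℚ_[p]) ^ j /
          (j.factorial : ℚ_[p]))) = (((1 + p * b : ℤ_[p]) : ℚ_[p])) ^ n :=
  stmt16_general p b x
end
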